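/- arXiv:0806.0607 — 11 statements merged into one kernel-verified Lean document; each statement's English description precedes it below -/
import Mathlib

section
/- Let i, j, N be integers with 0 < i ≤ j and 2j ≤ N. Then the binomial coefficients C(N,i) and C(N,j) have a common divisor greater than 1; that is, gcd(C(N,i), C(N,j)) > 1. -/
/-! If `C(N,i)` and `C(N,j)` were coprime, the identity `C(N,j) C(j,i) = C(N,i) C(N-i,j-i)`
would force `C(N,i) ∣ C(j,i)`; but `C(j,i) < C(N,i)` since `0 < i ≤ j < N`. -/

namespace Nat

theorem choose_lt_choose_of_lt {m n k : ℕ} (hk : 0 < k) (hkm : k ≤ m) (hmn : m < n) :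
    m.choose k < n.choose k := by
  obtain ⟨k, rfl⟩ : ∃ k', k = k' + 1 := ⟨k - 1, by omega⟩
  calc m.choose (k + 1) < m.choose k + m.choose (k + 1) := by
        have : 0 < m.choose k := Nat.choose_pos (by omega)
        omega
    _ = (m + 1).choose (k + 1) := (Nat.choose_succ_succ' m k).symm
    _ ≤ n.choose (k + 1) := Nat.choose_le_choose _ hmn

theorem choose_dvd_choose_of_coprime {n k m : ℕ} (hkm : k ≤ m)
    (h : Nat.Coprime (n.choose k) (n.choose m)) : n.choose k ∣ m.choose k :=
  h.dvd_of_dvd_mul_left ⟨_, Nat.choose_mul hkm⟩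

end Nat

theorem stmt_0 (i j N : ℕ) (hi : 0 < i) (hij : i ≤ j) (hjN : 2 * j ≤ N) :
    1 < Nat.gcd (N.choose i) (N.choose j) := by
  have hjN' : j < N := by omega
  have hgcd_pos : 0 < Nat.gcd (N.choose i) (N.choose j) :=
    Nat.gcd_pos_of_pos_left _ (Nat.choose_pos (by omega))
  by_contra hgcd_le
  have hcop : Nat.Coprime (N.choose i) (N.choose j) := by
    unfold Nat.Coprime; omega
  have hchoose_le : N.choose i ≤ j.choose i :=
    Nat.le_of_dvd (Nat.choose_pos hij) (Nat.choose_dvd_choose_of_coprime hij hcop)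
  exact absurd hchoose_le (Nat.choose_lt_choose_of_lt hi hij hjN').not_ge
end

section
/- Let i, j, N be integers with 0 < i ≤ j and 2j ≤ N. Then gcd(C(N,i), C(N,j)) ≥ 2^i. -/
/-!
Choosing `j` elements and then `i` of them is the same as choosing `i` and then `j - i` more,
so `C(N,i) ∣ C(N,j) C(j,i)` and hence `C(N,i) ≤ gcd(C(N,i), C(N,j)) C(j,i)`. On the other hand
`C(N,i) ≥ C(2j,i) ≥ 2^i C(j,i)`, and dividing by `C(j,i)` gives the bound.
-/

namespace Nat

theorem pow_mul_descFactorial_le_descFactorial_mul (a n k : ℕ) :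
    a ^ k * n.descFactorial k ≤ (a * n).descFactorial k := by
  induction k with
  | zero => simp
  | succ k ih =>
    have step : a * (n - k) ≤ a * n - k := by
      rcases Nat.eq_zero_or_pos a with rfl | ha
      · simp
      · rw [Nat.mul_sub]
        have : k ≤ a * k := Nat.le_mul_of_pos_left k ha
        omega
    calc a ^ (k + 1) * n.descFactorial (k + 1)
        = (a * (n - k)) * (a ^ k * n.descFactorial k) := by
          rw [descFactorial_succ, pow_succ]; ring
      _ ≤ (a * n - k) * (a * n).descFactorial k := Nat.mul_le_mul step ih
      _ = (a * n).descFactorial (k + 1) := (descFactorial_succ _ _).symm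

theorem pow_mul_choose_le_choose_mul (a n k : ℕ) :
    a ^ k * n.choose k ≤ (a * n).choose k := by
  have h := pow_mul_descFactorial_le_descFactorial_mul a n k
  rw [descFactorial_eq_factorial_mul_choose, descFactorial_eq_factorial_mul_choose,
    mul_left_comm] at h
  exact Nat.le_of_mul_le_mul_left h (factorial_pos k)

theorem choose_dvd_gcd_choose_mul_choose {n k m : ℕ} (hkm : k ≤ m) :
    n.choose k ∣ Nat.gcd (n.choose k) (n.choose m) * m.choose k := by
  rw [← Nat.gcd_mul_right]
  refine Nat.dvd_gcd (Nat.dvd_mul_right _ _) ⟨(n - k).choose (m - k), ?_⟩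
  exact choose_mul hkm

theorem choose_le_gcd_choose_mul_choose {n k m : ℕ} (hkm : k ≤ m) :
    n.choose k ≤ Nat.gcd (n.choose k) (n.choose m) * m.choose k := by
  rcases Nat.eq_zero_or_pos (n.choose k) with h | h
  · rw [h]; exact Nat.zero_le _
  · exact Nat.le_of_dvd (Nat.mul_pos (Nat.gcd_pos_of_pos_left _ h) (choose_pos hkm))
      (choose_dvd_gcd_choose_mul_choose hkm)

end Nat

theorem stmt_1_general (i j N : ℕ) (hij : i ≤ j) (hjN : 2 * j ≤ N) :
    2 ^ i ≤ Nat.gcd (N.choose i) (N.choose j) := by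
  have hbound : 2 ^ i * j.choose i ≤ Nat.gcd (N.choose i) (N.choose j) * j.choose i :=
    calc 2 ^ i * j.choose i ≤ (2 * j).choose i := Nat.pow_mul_choose_le_choose_mul 2 j i
      _ ≤ N.choose i := Nat.choose_le_choose i hjN
      _ ≤ Nat.gcd (N.choose i) (N.choose j) * j.choose i :=
          Nat.choose_le_gcd_choose_mul_choose hij
  exact Nat.le_of_mul_le_mul_right hbound (Nat.choose_pos hij)

theorem stmt_1 (i j N : ℕ) (hi : 0 < i) (hij : i ≤ j) (hjN : 2 * j ≤ N) :
    2 ^ i ≤ Nat.gcd (N.choose i) (N.choose j) :=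
  stmt_1_general i j N hij hjN
end

section
/- Let i, j, N be integers with 2 ≤ i ≤ j and 2j ≤ N. Then, as real numbers, gcd(C(N,i), C(N,j)) ≥ ((N−i+2)(N−i+1)/(i(i−1))) · √(2^(2i−3)(i−1)/N³), and consequently gcd(C(N,i), C(N,j)) ≥ √N · 2^(i−7/2) / (i·√(i−1)). -/
/-!
Write `g = gcd (C(N,i), C(N,j))`. By Kummer's theorem, every base-`p^t` carry of `i + (N - i)`
that is not also a carry of `j + (N - j)` forces two of the following: a carry in `C(j, i-1)`,
a carry in `C(N-j, i-1)`, `p^t ∣ N - i + 1`, `p^t ∣ i - 1`. Hence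
`C(N,i)^2 ∣ g^2 (i-1)(N-i+1) C(j,i-1) C(N-j,i-1)`. On the other hand AM-GM gives
`4^k (k!)^2 C(j,k) C(N-j,k) ≤ ∏_{t<k} (N-2t)^2`, which is small compared with `C(N,i)^2`;
comparing the two yields the first bound, and `4 (N-i+2)(N-i+1) ≥ N^2` the second.
-/

open Finset
open scoped Nat

theorem Nat.le_mod_add_mod_sub_iff {P x s : ℕ} (hP : 0 < P) (hxs : x ≤ s) :
    P ≤ x % P + (s - x) % P ↔ s % P < x % P := by
  have h := Nat.add_mod_add_ite x (s - x) P
  rw [Nat.add_sub_cancel' hxs] at h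
  have := Nat.mod_lt (s - x) hP
  split_ifs at h <;> omega

theorem Nat.factorization_choose_eq_card_mod_lt {p n k b : ℕ} (hp : p.Prime) (hkn : k ≤ n)
    (hnb : Nat.log p n < b) :
    (n.choose k).factorization p = #{t ∈ Ico 1 b | n % p ^ t < k % p ^ t} := by
  rw [Nat.factorization_choose hp hkn hnb]
  congr 1
  exact filter_congr fun t _ ↦ Nat.le_mod_add_mod_sub_iff (pow_pos hp.pos t) hkn

/-- Levelwise form of the carry count in the header, for the modulus `P = p ^ t`. -/
theorem two_mul_carry_le {P i j N : ℕ} (hP : 0 < P) (hi : 1 ≤ i) (hiN : i ≤ N) (hjN : j ≤ N) :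
    2 * (if N % P < i % P then 1 else 0) ≤ 2 * (if N % P < j % P then 1 else 0)
      + (if j % P < (i - 1) % P then 1 else 0) + (if (N - j) % P < (i - 1) % P then 1 else 0)
      + (if P ∣ N - (i - 1) then 1 else 0) + (if P ∣ i - 1 then 1 else 0) := by
  have hj := Nat.add_mod_add_ite j (N - j) P
  have hi' := Nat.add_mod_add_ite (i - 1) (N - (i - 1)) P
  have hone := Nat.add_mod_add_ite (i - 1) 1 P
  rw [Nat.add_sub_cancel' hjN] at hj
  rw [Nat.add_sub_cancel' (by omega)] at hi'
  rw [Nat.sub_add_cancel hi] at hone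
  have : P = 1 ∨ 1 % P = 1 := (eq_or_ne P 1).imp_right Nat.one_mod_eq_one.mpr
  have := Nat.mod_lt j hP
  have := Nat.mod_lt (N - j) hP
  have := Nat.mod_lt (i - 1) hP
  have := Nat.mod_lt (N - (i - 1)) hP
  have := Nat.mod_lt N hP
  have := Nat.mod_lt i hP
  simp only [Nat.dvd_iff_mod_eq_zero]
  split_ifs at hj hi' hone ⊢ <;> omega

theorem two_mul_factorization_choose_le {p i j N : ℕ} (hp : p.Prime) (hi : 2 ≤ i) (hij : i ≤ j)
    (hjN : 2 * j ≤ N) :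
    2 * (N.choose i).factorization p ≤ 2 * (N.choose j).factorization p
      + (j.choose (i - 1)).factorization p + ((N - j).choose (i - 1)).factorization p
      + (N - (i - 1)).factorization p + (i - 1).factorization p := by
  have hlt : ∀ n ≤ N, n < p ^ (N + 1) := fun n hn ↦ by
    have := Nat.lt_pow_self (n := N + 1) hp.one_lt
    omega
  have hlog : ∀ n ≤ N, n ≠ 0 → Nat.log p n < N + 1 := fun n hn h0 ↦
    Nat.log_lt_of_lt_pow h0 (hlt n hn)
  rw [Nat.factorization_choose_eq_card_mod_lt hp (by omega) (hlog N le_rfl (by omega)),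
    Nat.factorization_choose_eq_card_mod_lt hp (by omega) (hlog N le_rfl (by omega)),
    Nat.factorization_choose_eq_card_mod_lt hp (by omega) (hlog j (by omega) (by omega)),
    Nat.factorization_choose_eq_card_mod_lt hp (by omega) (hlog (N - j) (by omega) (by omega)),
    Nat.factorization_eq_card_pow_dvd_of_lt hp (by omega) (hlt _ (by omega)),
    Nat.factorization_eq_card_pow_dvd_of_lt hp (by omega) (hlt _ (by omega))]
  simp only [card_filter, mul_sum, ← sum_add_distrib]
  exact sum_le_sum fun t _ ↦ two_mul_carry_le (pow_pos hp.pos t) (by omega) (by omega) (by omega)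

theorem choose_sq_dvd_gcd_sq_mul {i j N : ℕ} (hi : 2 ≤ i) (hij : i ≤ j) (hjN : 2 * j ≤ N) :
    N.choose i ^ 2 ∣ (N.choose i).gcd (N.choose j) ^ 2 *
      ((i - 1) * (N - (i - 1)) * (j.choose (i - 1) * (N - j).choose (i - 1))) := by
  have hCi : N.choose i ≠ 0 := (Nat.choose_pos (by omega)).ne'
  have hCj : N.choose j ≠ 0 := (Nat.choose_pos (by omega)).ne'
  have hC1 : j.choose (i - 1) ≠ 0 := (Nat.choose_pos (by omega)).ne'
  have hC2 : (N - j).choose (i - 1) ≠ 0 := (Nat.choose_pos (by omega)).ne'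
  have hg : (N.choose i).gcd (N.choose j) ≠ 0 := Nat.gcd_ne_zero_left hCi
  have hi1 : i - 1 ≠ 0 := by omega
  have hNi : N - (i - 1) ≠ 0 := by omega
  rw [← Nat.factorization_le_iff_dvd (by positivity) (by positivity)]
  intro p
  by_cases hp : p.Prime
  · have := two_mul_factorization_choose_le hp hi hij hjN
    rw [Nat.factorization_pow, Nat.factorization_mul (by positivity) (by positivity),
      Nat.factorization_pow, Nat.factorization_gcd hCi hCj, Nat.factorization_mul (by positivity)
      (by positivity), Nat.factorization_mul hi1 hNi, Nat.factorization_mul hC1 hC2]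
    simp only [Finsupp.add_apply, Finsupp.smul_apply, Finsupp.inf_apply, smul_eq_mul]
    omega
  · simp [Nat.factorization_eq_zero_of_not_prime _ hp]

theorem four_pow_mul_descFactorial_mul_descFactorial_le (m n k : ℕ) :
    4 ^ k * (m.descFactorial k * n.descFactorial k) ≤ (∏ t ∈ range k, (m + n - 2 * t)) ^ 2 := by
  induction k with
  | zero => simp
  | succ k ih =>
    have amgm : 4 * (m - k) * (n - k) ≤ (m + n - 2 * k) ^ 2 := by
      rcases le_or_gt k m with hm | hm
      · rcases le_or_gt k n with hn | hn
        · rw [show m + n - 2 * k = (m - k) + (n - k) by omega]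
          exact four_mul_le_sq_add (m - k) (n - k)
        · simp [Nat.sub_eq_zero_of_le hn.le]
      · simp [Nat.sub_eq_zero_of_le hm.le]
    calc 4 ^ (k + 1) * (m.descFactorial (k + 1) * n.descFactorial (k + 1))
        = 4 ^ k * (m.descFactorial k * n.descFactorial k) * (4 * (m - k) * (n - k)) := by
          rw [Nat.descFactorial_succ, Nat.descFactorial_succ]; ring
      _ ≤ (∏ t ∈ range k, (m + n - 2 * t)) ^ 2 * (m + n - 2 * k) ^ 2 := Nat.mul_le_mul ih amgm
      _ = (∏ t ∈ range (k + 1), (m + n - 2 * t)) ^ 2 := by rw [prod_range_succ, mul_pow]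

theorem prod_range_succ_sub_two_mul_le (N k : ℕ) :
    ∏ t ∈ range (k + 1), (N - 2 * t) ≤ N * N.descFactorial k := by
  rw [prod_range_succ', Nat.descFactorial_eq_prod_range, mul_comm]
  exact Nat.mul_le_mul (by simp) (prod_le_prod' fun t _ ↦ by omega)

theorem pow_mul_choose_mul_choose_le {i j N : ℕ} (hi : 2 ≤ i) (hiN : i ≤ N) (hjN : j ≤ N) :
    (N - i + 2) ^ 2 * (N - i + 1) ^ 3 * 2 ^ (2 * i - 3) *
        (j.choose (i - 1) * (N - j).choose (i - 1)) ≤ i ^ 2 * N ^ 3 * N.choose i ^ 2 := by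
  obtain ⟨k, rfl⟩ : ∃ k, i = k + 2 := ⟨i - 2, by omega⟩
  rw [show N - (k + 2) + 2 = N - k by omega, show N - (k + 2) + 1 = N - (k + 1) by omega,
    show 2 * (k + 2) - 3 = 2 * k + 1 by omega, show k + 2 - 1 = k + 1 by omega]
  have hAM := four_pow_mul_descFactorial_mul_descFactorial_le j (N - j) (k + 1)
  rw [Nat.add_sub_cancel' hjN] at hAM
  have hprod := prod_range_succ_sub_two_mul_le N k
  have hdesc :
      (k + 2) * (k + 1)! * N.choose (k + 2) = N.descFactorial k * (N - k) * (N - (k + 1)) := by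
    rw [← Nat.factorial_succ, ← Nat.descFactorial_eq_factorial_mul_choose, Nat.descFactorial_succ,
      Nat.descFactorial_succ]
    ring
  have h2 : 2 ^ (2 * k + 1) ≤ 4 ^ (k + 1) := by
    rw [show 4 = 2 ^ 2 by rfl, ← pow_mul]
    exact Nat.pow_le_pow_right two_pos (by omega)
  refine Nat.le_of_mul_le_mul_right (c := 4 ^ (k + 1) * (k + 1)! ^ 2) ?_ (by positivity)
  calc (N - k) ^ 2 * (N - (k + 1)) ^ 3 * 2 ^ (2 * k + 1) *
        (j.choose (k + 1) * (N - j).choose (k + 1)) * (4 ^ (k + 1) * (k + 1)! ^ 2)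
      = (N - k) ^ 2 * (N - (k + 1)) ^ 3 * 2 ^ (2 * k + 1) *
        (4 ^ (k + 1) * (j.descFactorial (k + 1) * (N - j).descFactorial (k + 1))) := by
        rw [Nat.descFactorial_eq_factorial_mul_choose, Nat.descFactorial_eq_factorial_mul_choose]
        ring
    _ ≤ (N - k) ^ 2 * (N - (k + 1)) ^ 3 * 2 ^ (2 * k + 1) * (N * N.descFactorial k) ^ 2 := by
        gcongr
        exact hAM.trans (Nat.pow_le_pow_left hprod 2)
    _ = (N - (k + 1)) * 2 ^ (2 * k + 1) * (N.descFactorial k * (N - k) * (N - (k + 1))) ^ 2 *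
        N ^ 2 := by ring
    _ ≤ N * 4 ^ (k + 1) * (N.descFactorial k * (N - k) * (N - (k + 1))) ^ 2 * N ^ 2 := by
        gcongr
        omega
    _ = (k + 2) ^ 2 * N ^ 3 * N.choose (k + 2) ^ 2 * (4 ^ (k + 1) * (k + 1)! ^ 2) := by
        rw [← hdesc]; ring

theorem two_rpow_two_mul_sub_three (x : ℝ) :
    (2 : ℝ) ^ (2 * x - 3) = 16 * (2 ^ (x - 7 / 2)) ^ 2 := by
  rw [← Real.rpow_natCast, ← Real.rpow_mul zero_le_two,
    show 2 * x - 3 = 4 + (x - 7 / 2) * (2 : ℕ) by push_cast; ring, Real.rpow_add two_pos]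
  norm_num

theorem sqrt_mul_rpow_div_le {x N : ℝ} (hx : 1 < x) (hN : 2 * x ≤ N) :
    √N * 2 ^ (x - 7 / 2) / (x * √(x - 1)) ≤
      (N - x + 2) * (N - x + 1) / (x * (x - 1)) * √(2 ^ (2 * x - 3) * (x - 1) / N ^ 3) := by
  have hN0 : 0 < N := by linarith
  have hx1 : 0 < x - 1 := by linarith
  have hA1 : 0 < N - x + 1 := by linarith
  have hA2 : 0 < N - x + 2 := by linarith
  have hA : N ^ 2 ≤ 4 * ((N - x + 2) * (N - x + 1)) := by nlinarith
  rw [← pow_le_pow_iff_left₀ (by positivity) (by positivity) two_ne_zero,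
    two_rpow_two_mul_sub_three, div_pow, mul_pow, mul_pow, mul_pow, div_pow, Real.sq_sqrt hN0.le,
    Real.sq_sqrt hx1.le, Real.sq_sqrt (by positivity)]
  have hu : 0 < ((2 : ℝ) ^ (x - 7 / 2)) ^ 2 := by positivity
  field_simp
  nlinarith [pow_le_pow_left₀ (sq_nonneg N) hA 2]

theorem div_mul_sqrt_le_of_sq_le_mul {x n t c C g : ℝ} (hx : 1 < x) (hxn : x ≤ n) (hc : 0 < c)
    (hg : 0 ≤ g) (hC : C ^ 2 ≤ g ^ 2 * ((x - 1) * (n - (x - 1)) * c))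
    (hB : (n - x + 2) ^ 2 * (n - x + 1) ^ 3 * t * c ≤ x ^ 2 * n ^ 3 * C ^ 2) :
    (n - x + 2) * (n - x + 1) / (x * (x - 1)) * √(t * (x - 1) / n ^ 3) ≤ g := by
  have hx1 : 0 < x - 1 := by linarith
  have hn : 0 < n := by linarith
  have hA1 : 0 < n - x + 1 := by linarith
  have hA2 : 0 < n - x + 2 := by linarith
  have hR : 0 ≤ (n - x + 2) * (n - x + 1) / (x * (x - 1)) := by positivity
  have hsq : ((n - x + 2) * (n - x + 1) / (x * (x - 1))) ^ 2 * (t * (x - 1) / n ^ 3) ≤ g ^ 2 := by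
    have hM : 0 < (x - 1) * (n - (x - 1)) * c := by nlinarith [mul_pos hx1 hA1]
    refine le_of_mul_le_mul_right (le_trans ?_ hC) hM
    calc _ = (n - x + 2) ^ 2 * (n - x + 1) ^ 3 * t * c / (x ^ 2 * n ^ 3) := by
          field_simp
          ring
      _ ≤ C ^ 2 := by rw [div_le_iff₀ (by positivity)]; linarith
  calc _ = √(((n - x + 2) * (n - x + 1) / (x * (x - 1))) ^ 2 * (t * (x - 1) / n ^ 3)) := by
        rw [Real.sqrt_mul (sq_nonneg _), Real.sqrt_sq hR]
    _ ≤ √(g ^ 2) := Real.sqrt_le_sqrt hsq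
    _ = g := Real.sqrt_sq hg

theorem stmt_2 (i j N : ℕ) (hi : 2 ≤ i) (hij : i ≤ j) (hjN : 2 * j ≤ N) :
    (((N : ℝ) - i + 2) * ((N : ℝ) - i + 1) / ((i : ℝ) * ((i : ℝ) - 1))) *
        Real.sqrt ((2 : ℝ) ^ (2 * (i : ℝ) - 3) * ((i : ℝ) - 1) / (N : ℝ) ^ 3)
      ≤ (Nat.gcd (N.choose i) (N.choose j) : ℝ) ∧
    Real.sqrt N * (2 : ℝ) ^ ((i : ℝ) - 7 / 2) / ((i : ℝ) * Real.sqrt ((i : ℝ) - 1))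
      ≤ (Nat.gcd (N.choose i) (N.choose j) : ℝ) := by
  have hg : 0 < Nat.gcd (N.choose i) (N.choose j) :=
    Nat.gcd_pos_of_pos_left _ (Nat.choose_pos (by omega))
  have hc : 0 < j.choose (i - 1) * (N - j).choose (i - 1) :=
    Nat.mul_pos (Nat.choose_pos (by omega)) (Nat.choose_pos (by omega))
  have hdvd := Nat.le_of_dvd
    (Nat.mul_pos (pow_pos hg 2) (Nat.mul_pos (Nat.mul_pos (by omega) (by omega)) hc))
    (choose_sq_dvd_gcd_sq_mul hi hij hjN)
  have hbinom := pow_mul_choose_mul_choose_le hi (by omega) (by omega : j ≤ N)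
  rify [show 1 ≤ i by omega, show i - 1 ≤ N by omega, show i ≤ N by omega] at hdvd hbinom hc
  rw [show (2 : ℝ) ^ (2 * i - 3) = (2 : ℝ) ^ (2 * (i : ℝ) - 3) by
    rw [← Real.rpow_natCast]; push_cast [Nat.cast_sub (by omega : 3 ≤ 2 * i)]; ring_nf] at hbinom
  have hiR : (2 : ℝ) ≤ i := by exact_mod_cast hi
  have hNR : 2 * (i : ℝ) ≤ N := by exact_mod_cast (by omega : 2 * i ≤ N)
  have hfirst := div_mul_sqrt_le_of_sq_le_mul (by linarith) (by linarith) hc (Nat.cast_nonneg _)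
    hdvd hbinom
  exact ⟨hfirst, (sqrt_mul_rpow_div_le (by linarith) hNR).trans hfirst⟩
end

section
/- Let N, i, j be integers with 2 ≤ i ≤ j and 2j ≤ N, and for h = 0, 1, 2 set Q_h = C(N,j)·C(j,i−h)·C(N−j,h). Then, as integers, (i−1)·((i−1)·Q₁² − 2i·Q₀·Q₂) = (j−i+2)·(N−j)·(N−i+1)·C(N,j)²·C(j,i−2)². -/
theorem stmt_3 (N i j : ℕ) (hi : 2 ≤ i) (hij : i ≤ j) (hjN : 2 * j ≤ N)
    (Q : ℕ → ℤ)
    (hQ : ∀ h, Q h = (N.choose j : ℤ) * (j.choose (i - h) : ℤ) * ((N - j).choose h : ℤ)) :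
    ((i : ℤ) - 1) * (((i : ℤ) - 1) * Q 1 ^ 2 - 2 * (i : ℤ) * Q 0 * Q 2)
      = ((j : ℤ) - i + 2) * ((N : ℤ) - j) * ((N : ℤ) - i + 1) *
        (N.choose j : ℤ) ^ 2 * (j.choose (i - 2) : ℤ) ^ 2 := by
  obtain ⟨a, rfl⟩ : ∃ a, i = a + 2 := ⟨i - 2, by omega⟩
  obtain ⟨b, rfl⟩ : ∃ b, j = a + 2 + b := ⟨j - (a + 2), by omega⟩
  obtain ⟨c, rfl⟩ : ∃ c, N = 2 * (a + 2 + b) + c := ⟨N - 2 * (a + 2 + b), by omega⟩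
  have hsub : 2 * (a + 2 + b) + c - (a + 2 + b) = a + 2 + b + c := by omega
  have hs1 : a + 2 - 1 = a + 1 := by omega
  have hs2 : a + 2 - 2 = a := by omega
  have hs0 : a + 2 - 0 = a + 2 := by omega
  rw [hQ 0, hQ 1, hQ 2, hsub, hs1, hs2, hs0]
  have h1 : (a + 2 + b).choose (a + 1) * (a + 1) = (a + 2 + b).choose a * (b + 2) := by
    have := Nat.choose_succ_right_eq (a + 2 + b) a
    rw [this]; congr 1; omega
  have h2 : (a + 2 + b).choose (a + 2) * (a + 2) = (a + 2 + b).choose (a + 1) * (b + 1) := by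
    have := Nat.choose_succ_right_eq (a + 2 + b) (a + 1)
    rw [this]; congr 1; omega
  have h3 : (a + 2 + b + c).choose 2 * 2 = (a + 2 + b + c) * (a + 1 + b + c) := by
    have := Nat.choose_succ_right_eq (a + 2 + b + c) 1
    rw [this, Nat.choose_one_right]; congr 1; omega
  have e1 : ((a + 2 + b).choose (a + 1) : ℤ) * (a + 1)
      = ((a + 2 + b).choose a : ℤ) * (b + 2) := by exact_mod_cast congrArg Nat.cast h1
  have e2 : ((a + 2 + b).choose (a + 2) : ℤ) * (a + 2)
      = ((a + 2 + b).choose (a + 1) : ℤ) * (b + 1) := by exact_mod_cast congrArg Nat.cast h2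
  have e3 : ((a + 2 + b + c).choose 2 : ℤ) * 2
      = ((a + 2 + b + c : ℕ) : ℤ) * ((a + 1 + b + c : ℕ) : ℤ) := by
    exact_mod_cast congrArg Nat.cast h3
  set A : ℤ := ((2 * (a + 2 + b) + c).choose (a + 2 + b) : ℤ) with hA
  set X0 : ℤ := ((a + 2 + b).choose a : ℤ)
  set X1 : ℤ := ((a + 2 + b).choose (a + 1) : ℤ)
  set X2 : ℤ := ((a + 2 + b).choose (a + 2) : ℤ)
  set T : ℤ := ((a + 2 + b + c).choose 2 : ℤ)
  push_cast at e3 ⊢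
  simp only [Nat.choose_zero_right, Nat.choose_one_right] at *
  push_cast
  linear_combination (A^2 * ((a:ℤ) + 2 + b + c)^2 * (((a:ℤ)+1)*X1 + ((b:ℤ)+2)*X0)
      - 2*A^2*X0*T*((b:ℤ)+1)) * e1
    - 2*A^2*X0*T*((a:ℤ)+1) * e2
    - ((b:ℤ)+1)*((b:ℤ)+2)*A^2*X0^2 * e3
end

section
/- Let p be a prime and a₁, …, a_k natural numbers. Then p does not divide the multinomial coefficient ch(a₁,…,a_k) if and only if for every m ≥ 0, the sum over i of the m-th base-p digit of aᵢ (that is, Σᵢ ((aᵢ / p^m) mod p)) is less than p, i.e., if and only if the sum a₁ + ⋯ + a_k can be computed in base p without carrying. -/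
/-!
By Legendre's formula, `v_p` of the multinomial coefficient is `∑_{m ≥ 1} (⌊N / p^m⌋ - ∑ᵢ ⌊aᵢ / p^m⌋)`
with `N = ∑ᵢ aᵢ`, a sum of nonnegative terms, so `p` does not divide it iff
`∑ᵢ ⌊aᵢ / p^m⌋ = ⌊N / p^m⌋` for every `m`. Splitting off the last digit,
`⌊x / p^m⌋ = p ⌊x / p^(m+1)⌋ + (m-th digit of x)`, these equalities force the digit sums to be
digits of `N`, hence `< p`; conversely, digit sums `< p` show inductively that
`∑ᵢ (aᵢ mod p^m) < p^m`, so no quotient by `p^m` loses anything.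
-/

open Finset

namespace Nat

variable {ι : Type*} (s : Finset ι) (f : ι → ℕ)

theorem sum_div_le_div_sum (n : ℕ) : ∑ i ∈ s, f i / n ≤ (∑ i ∈ s, f i) / n := by
  rcases n.eq_zero_or_pos with rfl | hn
  · simp
  rw [le_div_iff_mul_le hn, sum_mul]
  exact sum_le_sum fun i _ => div_mul_le_self _ _

theorem sum_div_eq_div_sum_of_sum_mod_lt {n : ℕ} (h : ∑ i ∈ s, f i % n < n) :
    ∑ i ∈ s, f i / n = (∑ i ∈ s, f i) / n := by
  have hmod : ∑ i ∈ s, f i % n = (∑ i ∈ s, f i) % n := by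
    rw [sum_nat_mod, mod_eq_of_lt h]
  have hsum : n * ∑ i ∈ s, f i / n + ∑ i ∈ s, f i % n = ∑ i ∈ s, f i := by
    rw [mul_sum, ← sum_add_distrib]
    exact sum_congr rfl fun i _ => div_add_mod _ _
  have hpos : 0 < n := (zero_le _).trans_lt h
  have hN := div_add_mod (∑ i ∈ s, f i) n
  apply Nat.eq_of_mul_eq_mul_left hpos
  omega

theorem padicValNat_multinomial_add_sum {p : ℕ} [hp : Fact p.Prime] :
    padicValNat p (multinomial s f) + ∑ i ∈ s, padicValNat p (f i)! =
      padicValNat p (∑ i ∈ s, f i)! := by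
  simp only [← factorization_def _ hp.out]
  rw [← multinomial_spec, mul_comm, factorization_mul (multinomial_pos s f).ne'
    (prod_ne_zero_iff.2 fun i _ => factorial_ne_zero _), factorization_prod
    fun i _ => factorial_ne_zero _, Finsupp.add_apply, Finsupp.finsetSum_apply]

/-- The `m`-th summand is the carry into position `m` when adding the `f i` in base `p`. -/
theorem padicValNat_multinomial {p b : ℕ} [Fact p.Prime] (hb : log p (∑ i ∈ s, f i) < b) :
    padicValNat p (multinomial s f) =
      ∑ m ∈ Ico 1 b, ((∑ i ∈ s, f i) / p ^ m - ∑ i ∈ s, f i / p ^ m) := by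
  have hf : ∀ i ∈ s, padicValNat p (f i)! = ∑ m ∈ Ico 1 b, f i / p ^ m := fun i hi =>
    padicValNat_factorial <|
      (log_mono_right (single_le_sum (fun j _ => zero_le (f j)) hi)).trans_lt hb
  rw [sum_tsub_distrib _ fun m _ => sum_div_le_div_sum s f _, ← padicValNat_factorial hb,
    ← padicValNat_multinomial_add_sum, sum_congr rfl hf, sum_comm, Nat.add_sub_cancel]

theorem not_dvd_multinomial_iff {p : ℕ} (hp : p.Prime) :
    ¬ p ∣ multinomial s f ↔ ∀ m, ∑ i ∈ s, f i / p ^ m = (∑ i ∈ s, f i) / p ^ m := by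
  have := Fact.mk hp
  have hval : ∀ b, log p (∑ i ∈ s, f i) < b → (padicValNat p (multinomial s f) = 0 ↔
      ∀ m ∈ Ico 1 b, ∑ i ∈ s, f i / p ^ m = (∑ i ∈ s, f i) / p ^ m) := fun b hb => by
    rw [padicValNat_multinomial s f hb, sum_eq_zero_iff]
    refine forall₂_congr fun m _ => ?_
    rw [Nat.sub_eq_zero_iff_le]
    exact ⟨(sum_div_le_div_sum s f _).antisymm, ge_of_eq⟩
  rw [dvd_iff_padicValNat_ne_zero (multinomial_pos s f).ne', not_not]
  constructor
  · intro h m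
    rcases m.eq_zero_or_pos with rfl | hm
    · simp
    exact (hval (max (log p (∑ i ∈ s, f i) + 1) (m + 1)) (by omega)).1 h m
      (mem_Ico.2 ⟨hm, by omega⟩)
  · exact fun h => (hval _ (lt_add_one _)).2 fun m _ => h m

theorem sum_mod_pow_lt_pow {p : ℕ} (h : ∀ m, ∑ i ∈ s, f i / p ^ m % p < p) (m : ℕ) :
    ∑ i ∈ s, f i % p ^ m < p ^ m := by
  induction m with
  | zero => simp [mod_one]
  | succ m ih =>
    simp only [mod_pow_succ, sum_add_distrib, ← mul_sum]
    calc ∑ i ∈ s, f i % p ^ m + p ^ m * ∑ i ∈ s, f i / p ^ m % p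
        < p ^ m * (∑ i ∈ s, f i / p ^ m % p + 1) := by rw [mul_add_one]; omega
      _ ≤ p ^ m * p := Nat.mul_le_mul_left _ (h m)
      _ = p ^ (m + 1) := (pow_succ p m).symm

theorem sum_div_pow_eq_div_sum_iff {p : ℕ} (hp : 0 < p) :
    (∀ m, ∑ i ∈ s, f i / p ^ m = (∑ i ∈ s, f i) / p ^ m) ↔
      ∀ m, ∑ i ∈ s, f i / p ^ m % p < p := by
  have hdigit : ∀ n m, n / p ^ m = p * (n / p ^ (m + 1)) + n / p ^ m % p := fun n m => by
    rw [pow_succ, ← Nat.div_div_eq_div_mul, div_add_mod]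
  constructor
  · intro h m
    have hsum : ∑ i ∈ s, f i / p ^ m =
        p * ∑ i ∈ s, f i / p ^ (m + 1) + ∑ i ∈ s, f i / p ^ m % p := by
      rw [mul_sum, ← sum_add_distrib]
      exact sum_congr rfl fun i _ => hdigit (f i) m
    have hN := hdigit (∑ i ∈ s, f i) m
    rw [h m, h (m + 1)] at hsum
    have hdigit_sum : ∑ i ∈ s, f i / p ^ m % p = (∑ i ∈ s, f i) / p ^ m % p := by omega
    rw [hdigit_sum]
    exact mod_lt _ hp
  · exact fun h m => sum_div_eq_div_sum_of_sum_mod_lt s f (sum_mod_pow_lt_pow s f h m)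

end Nat

theorem stmt_6 (p : ℕ) (hp : p.Prime) (k : ℕ) (a : Fin k → ℕ) :
    ¬ p ∣ Nat.multinomial Finset.univ a ↔ ∀ m : ℕ, (∑ i, a i / p ^ m % p) < p := by
  rw [Nat.not_dvd_multinomial_iff _ _ hp, Nat.sum_div_pow_eq_div_sum_iff _ _ hp.pos]
end

section
/- Let p be a prime, k a positive integer, and N a positive integer whose base-p digit sum is less than k. Then for every decomposition N = a₁ + ⋯ + a_k into k positive integers, the multinomial coefficient ch(a₁,…,a_k) is divisible by p. -/
lemma padicValNat_prod_aux (p : ℕ) [Fact p.Prime] {ι : Type*} (s : Finset ι) (f : ι → ℕ)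
    (h : ∀ i ∈ s, f i ≠ 0) :
    padicValNat p (∏ i ∈ s, f i) = ∑ i ∈ s, padicValNat p (f i) := by
  induction s using Finset.cons_induction with
  | empty => simp
  | cons a s ha ih =>
    rw [Finset.prod_cons, Finset.sum_cons,
      padicValNat.mul (h a (Finset.mem_cons_self _ _))
        (Finset.prod_ne_zero_iff.2 fun i hi => h i (Finset.mem_cons_of_mem hi)),
      ih (fun i hi => h i (Finset.mem_cons_of_mem hi))]

theorem stmt_7 (p : ℕ) (hp : p.Prime) (k : ℕ) (hk : 0 < k) (N : ℕ) (hN : 0 < N)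
    (hdig : (p.digits N).sum < k) (a : Fin k → ℕ) (hpos : ∀ i, 0 < a i)
    (hsum : ∑ i, a i = N) :
    p ∣ Nat.multinomial Finset.univ a := by
  haveI : Fact p.Prime := ⟨hp⟩
  -- digit sums of each a i are positive
  have hdpos : ∀ i, 0 < (p.digits (a i)).sum := by
    intro i
    have hne : p.digits (a i) ≠ [] :=
      (Nat.digits_ne_nil_iff_ne_zero).2 (hpos i).ne'
    have hlast := Nat.getLast_digit_ne_zero p (hpos i).ne'
    have hmem := List.getLast_mem hne
    have := List.single_le_sum (fun x _ => Nat.zero_le x) _ hmem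
    omega
  -- key inequality on valuations
  have hsum_le : ∀ i : Fin k, (p.digits (a i)).sum ≤ a i := fun i => Nat.digit_sum_le p (a i)
  have hlt : ∑ i, padicValNat p (Nat.factorial (a i)) < padicValNat p (Nat.factorial N) := by
    have h1 : (p - 1) * ∑ i, padicValNat p (Nat.factorial (a i)) = N - ∑ i, (p.digits (a i)).sum := by
      rw [Finset.mul_sum]
      rw [Finset.sum_congr rfl (fun i _ => sub_one_mul_padicValNat_factorial (a i))]
      rw [← hsum, Finset.sum_tsub_distrib _ (fun i _ => hsum_le i)]
    have h2 := sub_one_mul_padicValNat_factorial (p := p) N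
    have hk' : k ≤ ∑ i, (p.digits (a i)).sum := by
      calc k = ∑ _i : Fin k, 1 := by simp
        _ ≤ _ := Finset.sum_le_sum (fun i _ => hdpos i)
    have hle : ∑ i, (p.digits (a i)).sum ≤ N := by
      rw [← hsum]; exact Finset.sum_le_sum (fun i _ => hsum_le i)
    have hdN : (p.digits N).sum ≤ N := Nat.digit_sum_le p N
    have hpm : 1 < p := hp.one_lt
    have : (p - 1) * ∑ i, padicValNat p (Nat.factorial (a i)) < (p - 1) * padicValNat p (Nat.factorial N) := by
      omega
    exact lt_of_mul_lt_mul_left this (Nat.zero_le _)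
  -- conclude via multinomial_spec
  have spec := Nat.multinomial_spec Finset.univ a
  rw [hsum] at spec
  have hprodne : (∏ i, Nat.factorial (a i)) ≠ 0 := Finset.prod_ne_zero_iff.2 fun i _ => (Nat.factorial_pos _).ne'
  have hmne : Nat.multinomial Finset.univ a ≠ 0 := (Nat.multinomial_pos _ _).ne'
  have hval : padicValNat p (∏ i, Nat.factorial (a i)) + padicValNat p (Nat.multinomial Finset.univ a)
      = padicValNat p (Nat.factorial N) := by
    rw [← padicValNat.mul hprodne hmne, spec]
  have hprodval : padicValNat p (∏ i, Nat.factorial (a i)) = ∑ i, padicValNat p (Nat.factorial (a i)) :=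
    padicValNat_prod_aux p Finset.univ _ (fun i _ => (Nat.factorial_pos _).ne')
  rw [hprodval] at hval
  have : 0 < padicValNat p (Nat.multinomial Finset.univ a) := by omega
  exact dvd_of_one_le_padicValNat this
end

section
/- Let N = a₁ + ⋯ + a_k be a decomposition of a positive integer into positive integer summands such that 2 does not divide the multinomial coefficient ch(a₁,…,a_k). Then the 2-adic valuations of a₁, …, a_k are pairwise distinct: for i ≠ j, v₂(aᵢ) ≠ v₂(aⱼ). -/
/-!
If `v₂(aᵢ) = v₂(aⱼ) = v`, both summands have a `1` in binary digit `v` and no lower digits, so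
adding them in base 2 carries; by Kummer's theorem `(aᵢ + aⱼ).choose aᵢ` is even, and this binomial
coefficient divides the multinomial coefficient.
-/

open Finset
open scoped Nat

lemma Nat.mod_two_pow_factorization_succ {m : ℕ} (hm : m ≠ 0) :
    m % 2 ^ (m.factorization 2 + 1) = 2 ^ m.factorization 2 := by
  set v := m.factorization 2
  have hodd : m / 2 ^ v % 2 = 1 := Nat.two_dvd_ne_zero.mp (Nat.not_dvd_ordCompl Nat.prime_two hm)
  calc m % 2 ^ (v + 1) = 2 ^ v * (m / 2 ^ v) % (2 ^ v * 2) := by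
        rw [Nat.ordProj_mul_ordCompl_eq_self, pow_succ]
    _ = 2 ^ v := by rw [Nat.mul_mod_mul_left, hodd, mul_one]

lemma Nat.two_dvd_add_choose_of_factorization_eq {m n : ℕ} (hm : m ≠ 0) (hn : n ≠ 0)
    (h : m.factorization 2 = n.factorization 2) : 2 ∣ (m + n).choose m := by
  set v := m.factorization 2
  set b := max (v + 2) (Nat.log 2 (n + m) + 1)
  have hlog : Nat.log 2 (n + m) < b := by omega
  have hmod_m : m % 2 ^ (v + 1) = 2 ^ v := Nat.mod_two_pow_factorization_succ hm
  have hmod_n : n % 2 ^ (v + 1) = 2 ^ v := h ▸ Nat.mod_two_pow_factorization_succ hn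
  have hcarry : v + 1 ∈ {i ∈ Ico 1 b | 2 ^ i ≤ m % 2 ^ i + n % 2 ^ i} := by
    rw [mem_filter, mem_Ico, hmod_m, hmod_n, pow_succ]
    omega
  apply Nat.dvd_of_factorization_pos
  rw [add_comm, Nat.factorization_choose' Nat.prime_two hlog]
  exact (Finset.card_pos.mpr ⟨_, hcarry⟩).ne'

lemma Nat.multinomial_eq_choose_mul_multinomial_mul_multinomial {α : Type*} [DecidableEq α]
    {s t : Finset α} (hts : t ⊆ s) (f : α → ℕ) :
    Nat.multinomial s f = (∑ i ∈ s, f i).choose (∑ i ∈ t, f i) *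
      (Nat.multinomial t f * Nat.multinomial (s \ t) f) := by
  have hprod : 0 < ∏ i ∈ s, (f i)! := prod_pos fun i _ ↦ Nat.factorial_pos _
  refine Nat.eq_of_mul_eq_mul_left hprod ?_
  rw [Nat.multinomial_spec, ← prod_sdiff hts, ← sum_sdiff hts,
    ← Nat.add_choose_mul_factorial_mul_factorial, ← Nat.multinomial_spec t,
    ← Nat.multinomial_spec (s \ t)]
  ring

lemma Nat.choose_dvd_multinomial {α : Type*} {s : Finset α} {i j : α} (hi : i ∈ s) (hj : j ∈ s)
    (hij : i ≠ j) (f : α → ℕ) : (f i + f j).choose (f i) ∣ Nat.multinomial s f := by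
  classical
  rw [← Nat.binomial_eq_choose hij, Nat.multinomial_eq_choose_mul_multinomial_mul_multinomial
    (insert_subset hi (singleton_subset_iff.mpr hj))]
  exact dvd_mul_of_dvd_right (dvd_mul_right _ _) _

theorem stmt_8_general (k : ℕ) (a : Fin k → ℕ) (hpos : ∀ i, 0 < a i)
    (h2 : ¬ 2 ∣ Nat.multinomial Finset.univ a) :
    ∀ i j, i ≠ j → (a i).factorization 2 ≠ (a j).factorization 2 := by
  intro i j hij heq
  exact h2 <| (Nat.two_dvd_add_choose_of_factorization_eq (hpos i).ne' (hpos j).ne' heq).trans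
    (Nat.choose_dvd_multinomial (mem_univ i) (mem_univ j) hij a)

theorem stmt_8 (k : ℕ) (N : ℕ) (hN : 0 < N) (a : Fin k → ℕ) (hpos : ∀ i, 0 < a i)
    (hsum : ∑ i, a i = N) (h2 : ¬ 2 ∣ Nat.multinomial Finset.univ a) :
    ∀ i j, i ≠ j → (a i).factorization 2 ≠ (a j).factorization 2 :=
  stmt_8_general k a hpos h2
end

section
/- Let N = a₁ + a₂ + a₃ be a decomposition of a positive integer into three positive integer summands such that 2 does not divide the trinomial coefficient ch(a₁,a₂,a₃). Then 32·a₁·a₂·a₃ ≤ N³. -/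
-- no-carry lemma
lemma carryfree (k : ℕ) : ∀ a b : ℕ, Nat.choose (a + b) a % 2 = 1 →
    (a + b).testBit k = (a.testBit k || b.testBit k) ∧ (a.testBit k && b.testBit k) = false := by
  induction k with
  | zero =>
    intro a b h
    have step := @Choose.choose_modEq_choose_mod_mul_choose_div_nat (a+b) a 2 ⟨Nat.prime_two⟩
    rw [Nat.ModEq, h] at step
    have hnot : ¬ (a % 2 = 1 ∧ b % 2 = 1) := by
      rintro ⟨ha, hb⟩
      rw [Nat.add_mod, ha, hb] at step
      simp at step
    simp only [Nat.testBit_zero]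
    rcases Nat.mod_two_eq_zero_or_one a with ha | ha <;>
      rcases Nat.mod_two_eq_zero_or_one b with hb | hb <;>
      simp [Nat.add_mod, ha, hb] at hnot ⊢
  | succ k ih =>
    intro a b h
    have step := @Choose.choose_modEq_choose_mod_mul_choose_div_nat (a+b) a 2 ⟨Nat.prime_two⟩
    rw [Nat.ModEq, h] at step
    have hnot : ¬ (a % 2 = 1 ∧ b % 2 = 1) := by
      rintro ⟨ha, hb⟩
      rw [Nat.add_mod, ha, hb] at step
      simp at step
    have hdiv : (a + b) / 2 = a / 2 + b / 2 := by omega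
    have hodd : Nat.choose (a / 2 + b / 2) (a / 2) % 2 = 1 := by
      rw [← hdiv]
      rw [Nat.mul_mod] at step
      rcases Nat.mod_two_eq_zero_or_one (((a+b)/2).choose (a/2)) with hx | hx
      · rw [hx, mul_zero] at step; simp at step
      · exact hx
    have := ih (a/2) (b/2) hodd
    rw [Nat.testBit_add_one, Nat.testBit_add_one, Nat.testBit_add_one, hdiv]
    exact this

lemma multinomial3 (a b c : ℕ) :
    Nat.multinomial Finset.univ ![a, b, c] = (a + b + c).choose a * (b + c).choose b := by
  have key := Nat.multinomial_spec Finset.univ ![a, b, c]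
  rw [Fin.sum_univ_three, Fin.prod_univ_three] at key
  simp only [Matrix.cons_val_zero, Matrix.cons_val_one, Matrix.head_cons,
    Matrix.cons_val_two, Matrix.tail_cons] at key
  have k1 := Nat.add_choose_mul_factorial_mul_factorial a (b + c)
  have k2 := Nat.add_choose_mul_factorial_mul_factorial b c
  refine Nat.eq_of_mul_eq_mul_left
    (show 0 < a.factorial * b.factorial * c.factorial by positivity) ?_
  rw [key]
  have : a + b + c = a + (b + c) := by ring
  rw [this, ← k1, ← k2, ← Nat.choose_symm_add, ← Nat.choose_symm_add]
  ring

lemma final (a b c N : ℕ) (hsum : a + b + c = N) (hm : N < 2 * a) :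
    32 * (a * b * c) ≤ N ^ 3 := by
  subst hsum
  zify at hm ⊢
  have hb : (0:ℤ) ≤ b := by positivity
  have hc : (0:ℤ) ≤ c := by positivity
  have ha : (0:ℤ) ≤ a := by positivity
  have hd : (0:ℤ) ≤ a - b - c := by linarith
  nlinarith [mul_nonneg hd (sq_nonneg ((b:ℤ)+c)), mul_nonneg (add_nonneg hb hc) (sq_nonneg ((a:ℤ)-b-c)),
    mul_nonneg (mul_nonneg hd hd) hd, mul_nonneg ha (sq_nonneg ((b:ℤ)-c))]

theorem stmt_11 (N a₁ a₂ a₃ : ℕ) (hN : 0 < N)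
    (h₁ : 0 < a₁) (h₂ : 0 < a₂) (h₃ : 0 < a₃) (hsum : a₁ + a₂ + a₃ = N)
    (h2 : ¬ 2 ∣ Nat.multinomial Finset.univ ![a₁, a₂, a₃]) :
    32 * (a₁ * a₂ * a₃) ≤ N ^ 3 := by
  rw [multinomial3] at h2
  have hx : ¬ 2 ∣ (a₁ + a₂ + a₃).choose a₁ := fun h => h2 (h.mul_right _)
  have hy : ¬ 2 ∣ (a₂ + a₃).choose a₂ := fun h => h2 (h.mul_left _)
  have hx1 : (a₁ + (a₂ + a₃)).choose a₁ % 2 = 1 := by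
    rw [← Nat.add_assoc]; omega
  have hy1 : (a₂ + a₃).choose a₂ % 2 = 1 := by omega
  set k := Nat.log 2 N with hk
  have h2k : 2 ^ k ≤ N := Nat.pow_log_le_self 2 hN.ne'
  have hk2 : N < 2 ^ (k + 1) := Nat.lt_pow_succ_log_self (by norm_num) N
  have hpow : 2 ^ (k + 1) = 2 * 2 ^ k := by rw [pow_succ]; ring
  have htop : N.testBit k = true := by
    have hNr : N = 2 ^ k + (N - 2 ^ k) := by omega
    rw [hNr, Nat.testBit_two_pow_add_eq, Nat.testBit_lt_two_pow (by omega)]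
    rfl
  have hc1 := carryfree k a₁ (a₂ + a₃) hx1
  have hc2 := carryfree k a₂ a₃ hy1
  have hNsum : N.testBit k = (a₁.testBit k || (a₂.testBit k || a₃.testBit k)) := by
    rw [← hsum, Nat.add_assoc, hc1.1, hc2.1]
  rw [htop] at hNsum
  have hbig : (a₁.testBit k = true) ∨ (a₂.testBit k = true) ∨ (a₃.testBit k = true) := by
    rcases Bool.or_eq_true_iff.mp hNsum.symm with h | h
    · exact Or.inl h
    · exact Or.inr (Bool.or_eq_true_iff.mp h)
  rcases hbig with h | h | h
  · have := Nat.ge_two_pow_of_testBit h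
    exact final a₁ a₂ a₃ N hsum (by omega)
  · have := Nat.ge_two_pow_of_testBit h
    have := final a₂ a₁ a₃ N (by omega) (by omega)
    calc 32 * (a₁ * a₂ * a₃) = 32 * (a₂ * a₁ * a₃) := by ring
    _ ≤ N ^ 3 := this
  · have := Nat.ge_two_pow_of_testBit h
    have := final a₃ a₁ a₂ N (by omega) (by omega)
    calc 32 * (a₁ * a₂ * a₃) = 32 * (a₃ * a₁ * a₂) := by ring
    _ ≤ N ^ 3 := this
end

section
/- Let N ≥ 4 be an integer admitting decompositions N = (N−2) + 1 + 1, N = a₁ + a₂ + a₃, N = b₁ + b₂ + b₃ into positive integer summands, such that for every prime p at least one of the three trinomial coefficients ch(N−2,1,1), ch(a₁,a₂,a₃), ch(b₁,b₂,b₃) is not divisible by p. Then N−1 is divisible by at least 3 distinct primes, i.e., the set of prime factors of N−1 has cardinality at least 3. -/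
open Finset

private lemma carry_lemma {p : ℕ} (hp : p.Prime) {a b : ℕ}
    (h : ¬ p ∣ (a + b).choose a) (j : ℕ) :
    a % p ^ j + b % p ^ j = (a + b) % p ^ j := by
  rcases Nat.eq_zero_or_pos j with rfl | hj
  · simp [Nat.mod_one]
  · have hm : emultiplicity p ((b + a).choose a) = 0 :=
      emultiplicity_eq_zero.mpr (by rwa [Nat.add_comm b a])
    have hlog : Nat.log p (b + a) < Nat.log p (b + a) + j + 1 := by omega
    rw [Nat.Prime.emultiplicity_choose' hp hlog] at hm
    have hcard :
        #{i ∈ Finset.Ico 1 (Nat.log p (b + a) + j + 1) | p ^ i ≤ a % p ^ i + b % p ^ i} = 0 := by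
      exact_mod_cast hm
    rw [Finset.card_eq_zero] at hcard
    have hjmem : ¬ p ^ j ≤ a % p ^ j + b % p ^ j := by
      intro hle
      have hmem : j ∈ ({i ∈ Finset.Ico 1 (Nat.log p (b + a) + j + 1) |
          p ^ i ≤ a % p ^ i + b % p ^ i}) := by
        simp only [Finset.mem_filter, Finset.mem_Ico]
        exact ⟨⟨hj, by omega⟩, hle⟩
      rw [hcard] at hmem
      simp at hmem
    have h1 := Nat.add_mod a b (p ^ j)
    have h2 : (a % p ^ j + b % p ^ j) % p ^ j = a % p ^ j + b % p ^ j :=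
      Nat.mod_eq_of_lt (by omega)
    omega

private lemma multinomial_three (x y z : ℕ) :
    Nat.multinomial Finset.univ ![x, y, z] = (x + (y + z)).choose x * (y + z).choose y := by
  have huniv : (Finset.univ : Finset (Fin 3)) = insert 0 {1, 2} := by decide
  rw [huniv, Nat.multinomial_insert (by decide),
    Nat.binomial_eq_choose (show (1 : Fin 3) ≠ 2 by decide)]
  simp [Finset.sum_pair (show (1 : Fin 3) ≠ 2 by decide)]

private lemma tri_carry {p : ℕ} (hp : p.Prime) {x y z : ℕ}
    (h : ¬ p ∣ Nat.multinomial Finset.univ ![x, y, z]) (j : ℕ) :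
    x % p ^ j + y % p ^ j + z % p ^ j = (x + y + z) % p ^ j := by
  rw [multinomial_three] at h
  have h1 : ¬ p ∣ (x + (y + z)).choose x := fun hd => h (hd.mul_right _)
  have h2 : ¬ p ∣ (y + z).choose y := fun hd => h (hd.mul_left _)
  have c1 := carry_lemma hp h1 j
  have c2 := carry_lemma hp h2 j
  rw [show x + y + z = x + (y + z) by ring]
  omega

private lemma prod_pow_dvd (e : ℕ → ℕ) (m : ℕ) (S : Finset ℕ) :
    (∀ r ∈ S, r.Prime) → (∀ r ∈ S, r ^ e r ∣ m) → (∏ r ∈ S, r ^ e r) ∣ m := by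
  induction S using Finset.induction_on with
  | empty => simp
  | @insert x s hx ih =>
    intro hS h
    rw [Finset.prod_insert hx]
    have hco : Nat.Coprime (x ^ e x) (∏ r ∈ s, r ^ e r) :=
      Nat.Coprime.prod_right fun r hr =>
        Nat.Coprime.pow _ _ ((Nat.coprime_primes (hS x (Finset.mem_insert_self x s))
          (hS r (Finset.mem_insert_of_mem hr))).mpr (by rintro rfl; exact hx hr))
    exact hco.mul_dvd_of_dvd_of_dvd (h x (Finset.mem_insert_self x s))
      (ih (fun r hr => hS r (Finset.mem_insert_of_mem hr))
          (fun r hr => h r (Finset.mem_insert_of_mem hr)))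

private lemma split3 {x y z : ℕ} (h : x + y + z = 1) :
    (x = 1 ∧ y = 0 ∧ z = 0) ∨ (y = 1 ∧ x = 0 ∧ z = 0) ∨ (z = 1 ∧ x = 0 ∧ y = 0) := by omega

private lemma handler_pattern {x y z N n qq j : ℕ} (hq : qq.Prime)
    (h : ¬ qq ∣ Nat.multinomial Finset.univ ![x, y, z]) (hsum : x + y + z = N)
    (hN : N = n + 1) (hdvd : qq ^ j ∣ n) (h1 : 1 < qq ^ j) :
    x % qq ^ j + y % qq ^ j + z % qq ^ j = 1 := by
  have ht := tri_carry hq h j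
  rw [hsum, hN] at ht
  have h0 : n % qq ^ j = 0 := by
    obtain ⟨c, rfl⟩ := hdvd; exact Nat.mul_mod_right _ _
  have h1m : 1 % qq ^ j = 1 := Nat.one_mod_eq_one.mpr (by omega)
  have : (n + 1) % qq ^ j = 1 := by
    rw [Nat.add_mod, h0, h1m]
    simpa using h1m
  rw [this] at ht
  exact ht

private lemma handler_zero {x y z N qq j : ℕ} (hq : qq.Prime)
    (h : ¬ qq ∣ Nat.multinomial Finset.univ ![x, y, z]) (hsum : x + y + z = N)
    (hdvd : qq ^ j ∣ N) :
    qq ^ j ∣ x ∧ qq ^ j ∣ y ∧ qq ^ j ∣ z := by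
  have ht := tri_carry hq h j
  rw [hsum] at ht
  have h0 : N % qq ^ j = 0 := by
    obtain ⟨c, rfl⟩ := hdvd; exact Nat.mul_mod_right _ _
  rw [h0] at ht
  obtain ⟨h12, h3⟩ := Nat.add_eq_zero.mp ht
  obtain ⟨h1, h2⟩ := Nat.add_eq_zero.mp h12
  exact ⟨Nat.dvd_of_mod_eq_zero h1, Nat.dvd_of_mod_eq_zero h2, Nat.dvd_of_mod_eq_zero h3⟩

private lemma part_bound {x y z A m N : ℕ} (hx : 0 < x) (hy : 0 < y) (hz : 0 < z)
    (hsum : x + y + z = N) (hAx : A ∣ x) (hAy : A ∣ y) (hAz : A ∣ z)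
    (hco : Nat.Coprime A m) (hpat : x % m + y % m + z % m = 1) :
    A * (2 * m + 1) ≤ N := by
  have key : ∀ u : ℕ, 0 < u → A ∣ u → u % m = 0 → A * m ≤ u := fun u hu hAu hum =>
    Nat.le_of_dvd hu (hco.mul_dvd_of_dvd_of_dvd hAu (Nat.dvd_of_mod_eq_zero hum))
  have e : A * (2 * m + 1) = A + (A * m + A * m) := by ring
  rcases split3 hpat with ⟨h1, h2, h3⟩ | ⟨h1, h2, h3⟩ | ⟨h1, h2, h3⟩
  · have k1 : A ≤ x := Nat.le_of_dvd hx hAx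
    have k2 := key y hy hAy h2
    have k3 := key z hz hAz h3
    rw [e]; linarith
  · have k1 : A ≤ y := Nat.le_of_dvd hy hAy
    have k2 := key x hx hAx h2
    have k3 := key z hz hAz h3
    rw [e]; linarith
  · have k1 : A ≤ z := Nat.le_of_dvd hz hAz
    have k2 := key x hx hAx h2
    have k3 := key y hy hAy h3
    rw [e]; linarith

private lemma two_big {x y z m N : ℕ} (hx : 0 < x) (hy : 0 < y) (hz : 0 < z)
    (hsum : x + y + z = N) (hpat : x % m + y % m + z % m = 1) (hm : N ≤ 2 * m) : False := by
  rcases split3 hpat with ⟨h1, h2, h3⟩ | ⟨h1, h2, h3⟩ | ⟨h1, h2, h3⟩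
  · have k2 : m ≤ y := Nat.le_of_dvd hy (Nat.dvd_of_mod_eq_zero h2)
    have k3 : m ≤ z := Nat.le_of_dvd hz (Nat.dvd_of_mod_eq_zero h3)
    omega
  · have k2 : m ≤ x := Nat.le_of_dvd hx (Nat.dvd_of_mod_eq_zero h2)
    have k3 : m ≤ z := Nat.le_of_dvd hz (Nat.dvd_of_mod_eq_zero h3)
    omega
  · have k2 : m ≤ x := Nat.le_of_dvd hx (Nat.dvd_of_mod_eq_zero h2)
    have k3 : m ≤ y := Nat.le_of_dvd hy (Nat.dvd_of_mod_eq_zero h3)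
    omega

private lemma pigeon {x y z P Q n N : ℕ} (hx : 0 < x) (hy : 0 < y) (hz : 0 < z)
    (hsum : x + y + z = N) (hN : N = n + 1) (hn : 1 ≤ n)
    (hco : Nat.Coprime P Q) (hPQ : P * Q = n)
    (hpP : x % P + y % P + z % P = 1) (hpQ : x % Q + y % Q + z % Q = 1) : False := by
  have key : ∀ w : ℕ, 0 < w → w % P = 0 → w % Q = 0 → n ≤ w := fun w hw h1 h2 => by
    have hd : P * Q ∣ w :=
      hco.mul_dvd_of_dvd_of_dvd (Nat.dvd_of_mod_eq_zero h1) (Nat.dvd_of_mod_eq_zero h2)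
    exact hPQ ▸ Nat.le_of_dvd hw hd
  rcases split3 hpP with ⟨h1, h2, h3⟩ | ⟨h1, h2, h3⟩ | ⟨h1, h2, h3⟩ <;>
    rcases split3 hpQ with ⟨g1, g2, g3⟩ | ⟨g1, g2, g3⟩ | ⟨g1, g2, g3⟩ <;>
    first
      | (have := key x hx (by assumption) (by assumption); omega)
      | (have := key y hy (by assumption) (by assumption); omega)
      | (have := key z hz (by assumption) (by assumption); omega)

private lemma final_contra {A B P Q n N : ℕ} (hAB : A * B = N) (hPQ : P * Q = n)
    (hN : N = n + 1) (hP : 1 ≤ P) (hQ : 1 ≤ Q)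
    (h1 : A * (2 * P + 1) ≤ N) (h2 : B * (2 * Q + 1) ≤ N) : False := by
  have hN0 : 0 < N := by omega
  have hmul := Nat.mul_le_mul h1 h2
  have he : A * (2 * P + 1) * (B * (2 * Q + 1)) = N * ((2 * P + 1) * (2 * Q + 1)) := by
    rw [← hAB]; ring
  rw [he] at hmul
  have h3 : (2 * P + 1) * (2 * Q + 1) ≤ N := Nat.le_of_mul_le_mul_left hmul hN0
  nlinarith [h3, hPQ, hN, hP, hQ]

theorem stmt_13 (N a₁ a₂ a₃ b₁ b₂ b₃ : ℕ) (hN : 4 ≤ N)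
    (ha₁ : 0 < a₁) (ha₂ : 0 < a₂) (ha₃ : 0 < a₃) (hasum : a₁ + a₂ + a₃ = N)
    (hb₁ : 0 < b₁) (hb₂ : 0 < b₂) (hb₃ : 0 < b₃) (hbsum : b₁ + b₂ + b₃ = N)
    (hacc : ∀ p : ℕ, p.Prime →
      ¬ p ∣ Nat.multinomial Finset.univ ![N - 2, 1, 1] ∨
      ¬ p ∣ Nat.multinomial Finset.univ ![a₁, a₂, a₃] ∨
      ¬ p ∣ Nat.multinomial Finset.univ ![b₁, b₂, b₃]) :
    3 ≤ (N - 1).primeFactors.card := by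
  classical
  by_contra hcard
  push_neg at hcard
  obtain ⟨n, hNn⟩ : ∃ n, N = n + 1 := ⟨N - 1, by omega⟩
  have hn1 : N - 1 = n := by omega
  rw [hn1] at hcard
  have hn3 : 3 ≤ n := by omega
  have hn0 : n ≠ 0 := by omega
  -- the trivial decomposition has ch = N * n
  have hch : Nat.multinomial Finset.univ ![N - 2, 1, 1] = N * n := by
    rw [multinomial_three]
    have h1 : N - 2 + (1 + 1) = N := by omega
    rw [h1]
    have h3 : N.choose (N - 2) = N.choose 2 := by
      rw [show N - 2 = N - 2 from rfl, ← Nat.choose_symm (show 2 ≤ N by omega)]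
    have h4 : 2 ∣ N * (N - 1) := by
      rcases Nat.even_or_odd N with h | h
      · exact Dvd.dvd.mul_right h.two_dvd _
      · obtain ⟨k, hk⟩ := h
        exact Dvd.dvd.mul_left ⟨k, by omega⟩ _
    have h2 : (1 + 1).choose 1 = 2 := rfl
    rw [h3, h2, Nat.choose_two_right, Nat.div_mul_cancel h4, hn1]
  have hdvd_ch : ∀ p : ℕ, p.Prime → p ∣ N * n →
      (¬ p ∣ Nat.multinomial Finset.univ ![a₁, a₂, a₃] ∨
       ¬ p ∣ Nat.multinomial Finset.univ ![b₁, b₂, b₃]) := by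
    intro p hp hpd
    rcases hacc p hp with h | h | h
    · exact (h (hch ▸ hpd)).elim
    · exact Or.inl h
    · exact Or.inr h
  -- split the primes of N between a and b
  set pa : ℕ → Prop := fun r => ¬ r ∣ Nat.multinomial Finset.univ ![a₁, a₂, a₃] with hpa_def
  set A := ∏ r ∈ N.primeFactors.filter pa, r ^ N.factorization r with hA_def
  set B := ∏ r ∈ N.primeFactors.filter (fun r => ¬ pa r), r ^ N.factorization r with hB_def
  have hAB : A * B = N := by
    rw [hA_def, hB_def, Finset.prod_filter_mul_prod_filter_not]
    have := Nat.factorization_prod_pow_eq_self (show N ≠ 0 by omega)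
    rw [Nat.prod_factorization_eq_prod_primeFactors] at this
    exact this
  have hAdvd : A ∣ a₁ ∧ A ∣ a₂ ∧ A ∣ a₃ := by
    refine ⟨?_, ?_, ?_⟩ <;>
    · apply prod_pow_dvd
      · exact fun r hr => Nat.prime_of_mem_primeFactors (Finset.mem_filter.mp hr).1
      · intro r hr
        obtain ⟨hr1, hr2⟩ := Finset.mem_filter.mp hr
        have := handler_zero (Nat.prime_of_mem_primeFactors hr1) hr2 hasum
          (Nat.ordProj_dvd N r)
        tauto
  have hBdvd : B ∣ b₁ ∧ B ∣ b₂ ∧ B ∣ b₃ := by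
    refine ⟨?_, ?_, ?_⟩ <;>
    · apply prod_pow_dvd
      · exact fun r hr => Nat.prime_of_mem_primeFactors (Finset.mem_filter.mp hr).1
      · intro r hr
        obtain ⟨hr1, hr2⟩ := Finset.mem_filter.mp hr
        have hb : ¬ r ∣ Nat.multinomial Finset.univ ![b₁, b₂, b₃] := by
          rcases hdvd_ch r (Nat.prime_of_mem_primeFactors hr1)
            ((Nat.dvd_of_mem_primeFactors hr1).mul_right n) with h | h
          · exact absurd h (by simpa [hpa_def] using hr2)
          · exact h
        have := handler_zero (Nat.prime_of_mem_primeFactors hr1) hb hbsum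
          (Nat.ordProj_dvd N r)
        tauto
  -- coprimality of divisors of N with divisors of n
  have hcopNn : Nat.Coprime N n := by
    rw [hNn]; simpa using Nat.coprime_succ_self_left
  -- pick a prime p of n
  obtain ⟨p, hpmem⟩ := Nat.nonempty_primeFactors.mpr (show 1 < n by omega)
  have hp : p.Prime := Nat.prime_of_mem_primeFactors hpmem
  have hpdvdn : p ∣ n := Nat.dvd_of_mem_primeFactors hpmem
  have hfp : n.factorization p ≠ 0 := by
    simpa [Nat.support_factorization] using
      Finsupp.mem_support_iff.mp (by rwa [← Nat.support_factorization] at hpmem)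
  have hPdvd : p ^ n.factorization p ∣ n := Nat.ordProj_dvd n p
  have hP1 : 1 < p ^ n.factorization p := Nat.one_lt_pow hfp hp.one_lt
  have hpN : p ∣ N * n := hpdvdn.mul_left N
  by_cases hone : ∀ q ∈ n.primeFactors, q = p
  · -- n is a prime power: impossible
    have hsing : n.primeFactors = {p} := Finset.eq_singleton_iff_unique_mem.mpr ⟨hpmem, hone⟩
    have hnpow : n = p ^ n.factorization p := by
      conv_lhs => rw [← Nat.factorization_prod_pow_eq_self hn0]
      rw [Nat.prod_factorization_eq_prod_primeFactors, hsing, Finset.prod_singleton]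
    rcases hdvd_ch p hp hpN with h | h
    · exact two_big ha₁ ha₂ ha₃ hasum
        (handler_pattern hp h hasum hNn hPdvd hP1) (by omega)
    · exact two_big hb₁ hb₂ hb₃ hbsum
        (handler_pattern hp h hbsum hNn hPdvd hP1) (by omega)
  · push_neg at hone
    obtain ⟨q, hqmem, hqp⟩ := hone
    have hq : q.Prime := Nat.prime_of_mem_primeFactors hqmem
    have hqdvdn : q ∣ n := Nat.dvd_of_mem_primeFactors hqmem
    have hfq : n.factorization q ≠ 0 := by
      simpa [Nat.support_factorization] using
        Finsupp.mem_support_iff.mp (by rwa [← Nat.support_factorization] at hqmem)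
    have hQdvd : q ^ n.factorization q ∣ n := Nat.ordProj_dvd n q
    have hQ1 : 1 < q ^ n.factorization q := Nat.one_lt_pow hfq hq.one_lt
    have hqN : q ∣ N * n := hqdvdn.mul_left N
    have hpair : n.primeFactors = {p, q} := by
      refine (Finset.eq_of_subset_of_card_le ?_ ?_).symm
      · intro r hr
        rcases Finset.mem_insert.mp hr with rfl | hr2
        · exact hpmem
        · rw [Finset.mem_singleton.mp hr2]; exact hqmem
      · rw [Finset.card_pair (Ne.symm hqp)]; omega
    have hnPQ : p ^ n.factorization p * q ^ n.factorization q = n := by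
      conv_rhs => rw [← Nat.factorization_prod_pow_eq_self hn0]
      rw [Nat.prod_factorization_eq_prod_primeFactors, hpair,
        Finset.prod_pair (Ne.symm hqp)]
    have hcoPQ : Nat.Coprime (p ^ n.factorization p) (q ^ n.factorization q) :=
      Nat.Coprime.pow _ _ ((Nat.coprime_primes hp hq).mpr (Ne.symm hqp))
    have hcoAP : Nat.Coprime A (p ^ n.factorization p) :=
      ((hcopNn.coprime_dvd_left ⟨B, hAB.symm⟩).coprime_dvd_right hPdvd)
    have hcoAQ : Nat.Coprime A (q ^ n.factorization q) :=
      ((hcopNn.coprime_dvd_left ⟨B, hAB.symm⟩).coprime_dvd_right hQdvd)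
    have hcoBP : Nat.Coprime B (p ^ n.factorization p) :=
      ((hcopNn.coprime_dvd_left ⟨A, by rw [← hAB]; ring⟩).coprime_dvd_right hPdvd)
    have hcoBQ : Nat.Coprime B (q ^ n.factorization q) :=
      ((hcopNn.coprime_dvd_left ⟨A, by rw [← hAB]; ring⟩).coprime_dvd_right hQdvd)
    rcases hdvd_ch p hp hpN with hPa | hPb <;> rcases hdvd_ch q hq hqN with hQa | hQb
    · exact pigeon ha₁ ha₂ ha₃ hasum hNn (by omega) hcoPQ hnPQ
        (handler_pattern hp hPa hasum hNn hPdvd hP1)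
        (handler_pattern hq hQa hasum hNn hQdvd hQ1)
    · exact final_contra hAB hnPQ hNn (by omega) (by omega)
        (part_bound ha₁ ha₂ ha₃ hasum hAdvd.1 hAdvd.2.1 hAdvd.2.2 hcoAP
          (handler_pattern hp hPa hasum hNn hPdvd hP1))
        (part_bound hb₁ hb₂ hb₃ hbsum hBdvd.1 hBdvd.2.1 hBdvd.2.2 hcoBQ
          (handler_pattern hq hQb hbsum hNn hQdvd hQ1))
    · have hnQP : q ^ n.factorization q * p ^ n.factorization p = n := by
        rw [mul_comm]; exact hnPQ
      exact final_contra hAB hnQP hNn (by omega) (by omega)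
        (part_bound ha₁ ha₂ ha₃ hasum hAdvd.1 hAdvd.2.1 hAdvd.2.2 hcoAQ
          (handler_pattern hq hQa hasum hNn hQdvd hQ1))
        (part_bound hb₁ hb₂ hb₃ hbsum hBdvd.1 hBdvd.2.1 hBdvd.2.2 hcoBP
          (handler_pattern hp hPb hbsum hNn hPdvd hP1))
    · exact pigeon hb₁ hb₂ hb₃ hbsum hNn (by omega) hcoPQ hnPQ
        (handler_pattern hp hPb hbsum hNn hPdvd hP1)
        (handler_pattern hq hQb hbsum hNn hQdvd hQ1)
end

section
/- Let N ≥ 3 and let N = a₁ + a₂ + a₃ and N = b₁ + b₂ + b₃ be two decompositions into positive integer summands. Call a prime p relevant if p divides N(N−1)(N−2) and p divides both ch(a₁,a₂,a₃) and ch(b₁,b₂,b₃), and set C equal to the product over all relevant primes p of p^(v_p(N−2) + 2·v_p(N−1) + 3·v_p(N)), where v_p denotes the p-adic valuation. Then, as real numbers, C > 3⁶·(1 − 4/N); and if moreover 2 is not a relevant prime, then C > 3³·2⁶·(1 − 4/N). -/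
/-!
Write `M = N³(N-1)²(N-2)`, so that the exponent of `p` in `C` is `v_p(M)`. If `p` does not divide
`ch(a₁, a₂, a₃)`, Kummer's theorem says that adding `a₁ + a₂ + a₃` in base `p` produces no carry.
Hence if `q = p ^ k` divides `N - s` with `s < q`, the residues of the `aᵢ` modulo `q` add up to
`s`, so at least `3 - s` of the `aᵢ` are divisible by `q`. For odd `p` at most one of `N, N-1, N-2`
is divisible by `p`, and this gives `p ^ v_p(M) ∣ a₁a₂a₃`; for `p = 2`, looking one level higher
(modulo `2q`) yields one more factor `2`.

Every prime factor of `M` that is not relevant is acceptable for one of the two decompositions, so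
`M / C` divides `a₁a₂a₃ · b₁b₂b₃ ≤ (N/3)⁶`. If `2` is not relevant, one decomposition has no carry
in base `2`, hence a part larger than `N/2`, and its product is at most `N³/32`; together with the
extra factor `2` this replaces one `27` by `64`. Finally `M / N⁶ > 1 - 4/N`.
-/

open Finset

namespace Nat

theorem add_mod_pow_eq_of_not_dvd_choose {p m k : ℕ} (hp : p.Prime)
    (h : ¬ p ∣ (m + k).choose k) (i : ℕ) :
    (m + k) % p ^ i = m % p ^ i + k % p ^ i := by
  have hlt : m % p ^ i + k % p ^ i < p ^ i := by
    rcases lt_or_ge (log p (m + k)) i with hi | hi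
    · have := lt_pow_of_log_lt hp.one_lt hi
      rw [mod_eq_of_lt (by omega), mod_eq_of_lt (by omega)]
      omega
    rcases i.eq_zero_or_pos with rfl | hi0
    · simp [Nat.mod_one]
    have hcarries := factorization_eq_zero_of_not_dvd h
    rw [factorization_choose' hp (lt_succ_self _), Finset.card_eq_zero,
      filter_eq_empty_iff] at hcarries
    have := hcarries (mem_Ico.mpr ⟨hi0, by omega⟩)
    omega
  rw [add_mod, mod_eq_of_lt hlt]

theorem multinomial_univ_three_eq_choose_mul_choose (a b c : ℕ) :
    multinomial univ ![a, b, c] = (a + b + c).choose c * (a + b).choose b := by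
  have hspec : a ! * b ! * c ! * multinomial univ ![a, b, c] = (a + b + c)! := by
    simpa [Fin.prod_univ_three, Fin.sum_univ_three] using multinomial_spec univ ![a, b, c]
  refine Nat.eq_of_mul_eq_mul_left (by positivity : 0 < a ! * b ! * c !) ?_
  rw [hspec, ← add_choose_mul_factorial_mul_factorial (a + b) c,
    ← add_choose_mul_factorial_mul_factorial a b]
  ring

theorem add_add_mod_pow_eq_of_not_dvd_multinomial {p a b c : ℕ} (hp : p.Prime)
    (h : ¬ p ∣ multinomial univ ![a, b, c]) (i : ℕ) :
    (a + b + c) % p ^ i = a % p ^ i + b % p ^ i + c % p ^ i := by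
  rw [multinomial_univ_three_eq_choose_mul_choose, hp.prime.dvd_mul, not_or] at h
  rw [add_mod_pow_eq_of_not_dvd_choose hp h.1, add_mod_pow_eq_of_not_dvd_choose hp h.2]

theorem mod_pow_eq_zero_iff_le_factorization {p x j : ℕ} (hp : p.Prime) (hx : x ≠ 0) :
    x % p ^ j = 0 ↔ j ≤ x.factorization p := by
  rw [← dvd_iff_mod_eq_zero, hp.pow_dvd_iff_le_factorization hx]

theorem mod_ordProj_sub {p N s : ℕ} (hs : s ≤ N) (hsq : s < ordProj[p] (N - s)) :
    N % ordProj[p] (N - s) = s := by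
  obtain ⟨m, rfl⟩ : ∃ m, N = m + s := ⟨N - s, by omega⟩
  rw [Nat.add_sub_cancel] at hsq ⊢
  rw [add_mod, mod_eq_zero_of_dvd (ordProj_dvd m p), zero_add, mod_mod, mod_eq_of_lt hsq]

theorem mod_two_mul_ordProj_two_sub {N s : ℕ} (hs : s < N) (hsq : s < ordProj[2] (N - s)) :
    N % (2 * ordProj[2] (N - s)) = ordProj[2] (N - s) + s := by
  obtain ⟨m, rfl⟩ : ∃ m, N = m + s := ⟨N - s, by omega⟩
  rw [Nat.add_sub_cancel] at hsq ⊢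
  obtain ⟨t, ht⟩ : Odd (ordCompl[2] m) :=
    coprime_two_left.mp (coprime_ordCompl prime_two (by omega))
  have hm := ordProj_mul_ordCompl_eq_self m 2
  rw [ht] at hm
  nth_rewrite 1 [← hm]
  rw [show ordProj[2] m * (2 * t + 1) + s = (ordProj[2] m + s) + 2 * ordProj[2] m * t by ring,
    add_mul_mod_self_left, mod_eq_of_lt (by omega)]

theorem mod_two_pow_succ_eq_or (x k : ℕ) :
    x % 2 ^ (k + 1) = x % 2 ^ k ∨ x % 2 ^ (k + 1) = x % 2 ^ k + 2 ^ k := by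
  rw [pow_succ, Nat.mod_mul]
  rcases Nat.mod_two_eq_zero_or_one (x / 2 ^ k) with h | h <;> simp [h]

theorem three_sub_mul_le_factorization_of_mod_pow {p a b c k s : ℕ} (hp : p.Prime)
    (ha : a ≠ 0) (hb : b ≠ 0) (hc : c ≠ 0) (h : a % p ^ k + b % p ^ k + c % p ^ k = s) :
    (3 - s) * k ≤ a.factorization p + b.factorization p + c.factorization p := by
  have := mod_pow_eq_zero_iff_le_factorization (j := k) hp ha
  have := mod_pow_eq_zero_iff_le_factorization (j := k) hp hb
  have := mod_pow_eq_zero_iff_le_factorization (j := k) hp hc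
  rcases le_or_gt 3 s with hs | hs
  · simp [Nat.sub_eq_zero_of_le hs]
  generalize p ^ k = q at *
  interval_cases s <;> omega

theorem cube_mul_sq_mul_ne_zero {N : ℕ} (hN : 3 ≤ N) : N ^ 3 * (N - 1) ^ 2 * (N - 2) ≠ 0 :=
  mul_ne_zero (mul_ne_zero (by positivity) (pow_ne_zero _ (by omega))) (by omega)

theorem factorization_cube_mul_sq_mul {N : ℕ} (hN : 3 ≤ N) (p : ℕ) :
    (N ^ 3 * (N - 1) ^ 2 * (N - 2)).factorization p =
      3 * N.factorization p + 2 * (N - 1).factorization p + (N - 2).factorization p := by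
  rw [factorization_mul (mul_ne_zero (by positivity) (pow_ne_zero _ (by omega))) (by omega),
    factorization_mul (by positivity) (pow_ne_zero _ (by omega)),
    factorization_pow, factorization_pow]
  simp

theorem factorization_cube_mul_sq_mul_le_of_ne_two {p N a b c : ℕ} (hp : p.Prime) (hp2 : p ≠ 2)
    (hN : 3 ≤ N) (ha : a ≠ 0) (hb : b ≠ 0) (hc : c ≠ 0)
    (H : ∀ i, N % p ^ i = a % p ^ i + b % p ^ i + c % p ^ i) :
    (N ^ 3 * (N - 1) ^ 2 * (N - 2)).factorization p ≤ (a * b * c).factorization p := by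
  rw [factorization_cube_mul_sq_mul hN, factorization_mul (by positivity) hc,
    factorization_mul ha hb]
  simp only [Finsupp.add_apply]
  have hp3 : 3 ≤ p := by have := hp.two_le; omega
  have hval : ∀ s < 3, 1 ≤ (N - s).factorization p ↔ N % p = s := fun s hs => by
    rw [← hp.dvd_iff_one_le_factorization (by omega), ← modEq_iff_dvd' (by omega), ModEq,
      mod_eq_of_lt (by omega), eq_comm]
  have h0 := hval 0 (by norm_num)
  have h1 := hval 1 (by norm_num)
  have h2 := hval 2 (by norm_num)
  rw [Nat.sub_zero] at h0
  obtain ⟨s, hs⟩ : ∃ s, N % p = s := ⟨_, rfl⟩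
  rcases (show s < 3 ∨ 3 ≤ s by omega) with hs3 | hs3
  · have hk : 1 ≤ (N - s).factorization p := (hval s hs3).mpr hs
    have hNk := mod_ordProj_sub (p := p) (N := N) (s := s) (by omega)
      ((show s < p by omega).trans_le (le_self_pow₀ hp.one_le (by omega)))
    have key := three_sub_mul_le_factorization_of_mod_pow hp ha hb hc ((H _).symm.trans hNk)
    interval_cases s <;> norm_num at key hk <;> omega
  · omega

-- Modulo `2 ^ (k + 1)` exactly one of `a, b, c` picks up the extra `2 ^ k`; the residues of the
-- other two modulo `2 ^ k` lift unchanged.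
theorem le_factorization_two_of_mod_two_pow_succ {a b c k s : ℕ}
    (ha : a ≠ 0) (hb : b ≠ 0) (hc : c ≠ 0) (hs : s ≤ 1)
    (h : a % 2 ^ k + b % 2 ^ k + c % 2 ^ k = s)
    (h' : a % 2 ^ (k + 1) + b % 2 ^ (k + 1) + c % 2 ^ (k + 1) = 2 ^ k + s) :
    (3 - s) * k + (2 - s) ≤ a.factorization 2 + b.factorization 2 + c.factorization 2 := by
  have facts (x : ℕ) (hx : x ≠ 0) :=
    And.intro (mod_pow_eq_zero_iff_le_factorization (j := k) prime_two hx) <|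
      And.intro (mod_pow_eq_zero_iff_le_factorization (j := k + 1) prime_two hx)
        (mod_two_pow_succ_eq_or x k)
  have := facts a ha
  have := facts b hb
  have := facts c hc
  generalize 2 ^ (k + 1) = q' at *
  generalize 2 ^ k = q at *
  interval_cases s <;> omega

theorem le_factorization_two_of_mod_two_pow_succ_of_even {a b c k : ℕ}
    (ha : a ≠ 0) (hb : b ≠ 0) (hc : c ≠ 0) (ha2 : a % 2 = 0) (hb2 : b % 2 = 0) (hc2 : c % 2 = 0)
    (h : a % 2 ^ k + b % 2 ^ k + c % 2 ^ k = 2)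
    (h' : a % 2 ^ (k + 1) + b % 2 ^ (k + 1) + c % 2 ^ (k + 1) = 2 ^ k + 2) :
    2 * k + 2 ≤ a.factorization 2 + b.factorization 2 + c.factorization 2 := by
  rcases k.eq_zero_or_pos with rfl | hk
  · simp [Nat.mod_one] at h
  have h2k : 2 ∣ 2 ^ k := dvd_pow_self 2 hk.ne'
  have := mod_mod_of_dvd a h2k
  have := mod_mod_of_dvd b h2k
  have := mod_mod_of_dvd c h2k
  have := (prime_two.dvd_iff_one_le_factorization ha).mp (dvd_of_mod_eq_zero ha2)
  have := (prime_two.dvd_iff_one_le_factorization hb).mp (dvd_of_mod_eq_zero hb2)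
  have := (prime_two.dvd_iff_one_le_factorization hc).mp (dvd_of_mod_eq_zero hc2)
  have facts (x : ℕ) (hx : x ≠ 0) :=
    And.intro (mod_pow_eq_zero_iff_le_factorization (j := k) prime_two hx) <|
      And.intro (mod_pow_eq_zero_iff_le_factorization (j := k + 1) prime_two hx)
        (mod_two_pow_succ_eq_or x k)
  have := facts a ha
  have := facts b hb
  have := facts c hc
  generalize 2 ^ (k + 1) = q' at *
  generalize 2 ^ k = q at *
  omega

theorem factorization_cube_mul_sq_mul_lt_two {N a b c : ℕ} (hN : 3 ≤ N)
    (ha : a ≠ 0) (hb : b ≠ 0) (hc : c ≠ 0)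
    (H : ∀ i, N % 2 ^ i = a % 2 ^ i + b % 2 ^ i + c % 2 ^ i) :
    (N ^ 3 * (N - 1) ^ 2 * (N - 2)).factorization 2 < (a * b * c).factorization 2 := by
  rw [factorization_cube_mul_sq_mul hN, factorization_mul (by positivity) hc,
    factorization_mul ha hb]
  simp only [Finsupp.add_apply]
  have hN2q : ∀ s < 3, s < 2 ^ (N - s).factorization 2 →
      N % 2 ^ (N - s).factorization 2 = s ∧
        N % 2 ^ ((N - s).factorization 2 + 1) = 2 ^ (N - s).factorization 2 + s :=
    fun s hs hsq => ⟨mod_ordProj_sub (by omega) hsq,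
      by rw [pow_succ']; exact mod_two_mul_ordProj_two_sub (by omega) hsq⟩
  have hvN := prime_two.dvd_iff_one_le_factorization (n := N) (by omega)
  have hvN' := prime_two.pow_dvd_iff_le_factorization (k := 2) (n := N) (by omega)
  have hv1 := prime_two.dvd_iff_one_le_factorization (n := N - 1) (by omega)
  have hv2 := prime_two.dvd_iff_one_le_factorization (n := N - 2) (by omega)
  have hv2' := prime_two.pow_dvd_iff_le_factorization (k := 2) (n := N - 2) (by omega)
  norm_num at hvN' hv2'
  rcases (show N % 2 = 1 ∨ N % 4 = 0 ∨ N % 4 = 2 by omega) with hNmod | hNmod | hNmod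
  · obtain ⟨h, h'⟩ := hN2q 1 (by norm_num) (Nat.one_lt_two_pow (by omega))
    have := le_factorization_two_of_mod_two_pow_succ ha hb hc le_rfl ((H _).symm.trans h)
      ((H _).symm.trans h')
    omega
  · obtain ⟨h, h'⟩ := hN2q 0 (by norm_num) (by positivity)
    rw [Nat.sub_zero] at h h'
    have := le_factorization_two_of_mod_two_pow_succ ha hb hc zero_le_one ((H _).symm.trans h)
      ((H _).symm.trans h')
    omega
  · obtain ⟨h, h'⟩ := hN2q 2 (by norm_num) ((show 2 < 2 ^ 2 by norm_num).trans_le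
      (pow_le_pow_right₀ one_le_two (by omega)))
    have heven := H 1
    rw [pow_one] at heven
    have := le_factorization_two_of_mod_two_pow_succ_of_even ha hb hc (by omega) (by omega)
      (by omega) ((H _).symm.trans h) ((H _).symm.trans h')
    omega

theorem prod_pow_dvd_of_forall_pow_dvd {s : Finset ℕ} {f : ℕ → ℕ} {m : ℕ}
    (hs : ∀ p ∈ s, p.Prime) (h : ∀ p ∈ s, p ^ f p ∣ m) : ∏ p ∈ s, p ^ f p ∣ m :=
  prod_dvd_of_isRelPrime (fun p hp q hq hpq => coprime_iff_isRelPrime.mp <|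
    ((coprime_primes (hs p hp) (hs q hq)).mpr hpq).pow _ _) h

theorem exists_lt_two_mul_of_not_dvd_multinomial {a b c : ℕ} (habc : a + b + c ≠ 0)
    (h : ¬ 2 ∣ multinomial univ ![a, b, c]) :
    a + b + c < 2 * a ∨ a + b + c < 2 * b ∨ a + b + c < 2 * c := by
  -- without carries, the leading binary digit of `a + b + c` is a digit of one of `a, b, c`
  have H := add_add_mod_pow_eq_of_not_dvd_multinomial prime_two h (log 2 (a + b + c))
  have hlow := pow_log_le_self 2 habc
  have hhigh := lt_pow_succ_log_self one_lt_two (a + b + c)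
  rw [pow_succ] at hhigh
  have := mod_lt (a + b + c) (pow_pos two_pos (log 2 (a + b + c)))
  by_contra! hle
  rw [mod_eq_of_lt (a := a) (by omega), mod_eq_of_lt (a := b) (by omega),
    mod_eq_of_lt (a := c) (by omega)] at H
  omega

theorem amgm_three (x y z : ℕ) : 27 * (x * y * z) ≤ (x + y + z) ^ 3 := by
  zify
  nlinarith [mul_nonneg (Int.natCast_nonneg x) (sq_nonneg ((y : ℤ) - z)),
    mul_nonneg (Int.natCast_nonneg y) (sq_nonneg ((x : ℤ) - z)),
    mul_nonneg (Int.natCast_nonneg z) (sq_nonneg ((x : ℤ) - y)),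
    mul_nonneg (Int.natCast_nonneg (x + y + z)) (sq_nonneg ((x : ℤ) - y)),
    mul_nonneg (Int.natCast_nonneg (x + y + z)) (sq_nonneg ((y : ℤ) - z)),
    mul_nonneg (Int.natCast_nonneg (x + y + z)) (sq_nonneg ((x : ℤ) - z))]

theorem amgm_three_of_le_two_mul {x y z : ℕ} (h : x + y + z ≤ 2 * x) :
    32 * (x * y * z) ≤ (x + y + z) ^ 3 := by
  zify at h ⊢
  have hxs : (0 : ℤ) ≤ x - (y + z) := by linarith
  nlinarith [mul_nonneg (Int.natCast_nonneg x) (sq_nonneg ((y : ℤ) - z)),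
    mul_nonneg (mul_nonneg hxs hxs) (by positivity : (0 : ℤ) ≤ x + y + z),
    mul_nonneg (mul_nonneg hxs (Int.natCast_nonneg x)) (by positivity : (0 : ℤ) ≤ y + z)]

section Carries

variable {p N a b c : ℕ}

theorem ordProj_dvd_mul_mul_of_not_dvd_multinomial (hp : p.Prime) (ha : 0 < a) (hb : 0 < b)
    (hc : 0 < c) (hsum : a + b + c = N) (h : ¬ p ∣ multinomial univ ![a, b, c]) :
    ordProj[p] (N ^ 3 * (N - 1) ^ 2 * (N - 2)) ∣ a * b * c := by
  subst hsum
  have H := add_add_mod_pow_eq_of_not_dvd_multinomial hp h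
  rw [hp.pow_dvd_iff_le_factorization (by positivity)]
  rcases eq_or_ne p 2 with rfl | hp2
  · exact (factorization_cube_mul_sq_mul_lt_two (by omega) ha.ne' hb.ne' hc.ne' H).le
  · exact factorization_cube_mul_sq_mul_le_of_ne_two hp hp2 (by omega) ha.ne' hb.ne' hc.ne' H

theorem two_mul_ordProj_two_dvd_mul_mul_of_not_dvd_multinomial (ha : 0 < a) (hb : 0 < b)
    (hc : 0 < c) (hsum : a + b + c = N) (h : ¬ 2 ∣ multinomial univ ![a, b, c]) :
    2 * ordProj[2] (N ^ 3 * (N - 1) ^ 2 * (N - 2)) ∣ a * b * c := by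
  subst hsum
  have H := add_add_mod_pow_eq_of_not_dvd_multinomial prime_two h
  rw [← pow_succ', prime_two.pow_dvd_iff_le_factorization (by positivity)]
  exact factorization_cube_mul_sq_mul_lt_two (by omega) ha.ne' hb.ne' hc.ne' H

theorem prod_ordProj_le (ha : 0 < a) (hb : 0 < b) (hc : 0 < c) (hsum : a + b + c = N)
    {s : Finset ℕ} (hs : ∀ p ∈ s, p.Prime) (hnd : ∀ p ∈ s, ¬ p ∣ multinomial univ ![a, b, c]) :
    27 * ∏ p ∈ s, ordProj[p] (N ^ 3 * (N - 1) ^ 2 * (N - 2)) ≤ N ^ 3 := by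
  have hdvd := prod_pow_dvd_of_forall_pow_dvd hs fun p hp =>
    ordProj_dvd_mul_mul_of_not_dvd_multinomial (hs p hp) ha hb hc hsum (hnd p hp)
  calc 27 * ∏ p ∈ s, ordProj[p] (N ^ 3 * (N - 1) ^ 2 * (N - 2))
      ≤ 27 * (a * b * c) := Nat.mul_le_mul_left 27 (le_of_dvd (by positivity) hdvd)
    _ ≤ N ^ 3 := hsum ▸ amgm_three a b c

theorem prod_ordProj_le_of_two_mem (ha : 0 < a) (hb : 0 < b) (hc : 0 < c) (hsum : a + b + c = N)
    {s : Finset ℕ} (hs : ∀ p ∈ s, p.Prime) (hnd : ∀ p ∈ s, ¬ p ∣ multinomial univ ![a, b, c])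
    (h2 : 2 ∈ s) :
    64 * ∏ p ∈ s, ordProj[p] (N ^ 3 * (N - 1) ^ 2 * (N - 2)) ≤ N ^ 3 := by
  set M := N ^ 3 * (N - 1) ^ 2 * (N - 2)
  have hdvd : 2 * ∏ p ∈ s, ordProj[p] M ∣ a * b * c := by
    rw [← mul_prod_erase s _ h2, ← mul_assoc]
    refine Coprime.mul_dvd_of_dvd_of_dvd ?_
      (two_mul_ordProj_two_dvd_mul_mul_of_not_dvd_multinomial ha hb hc hsum (hnd 2 h2))
      (prod_pow_dvd_of_forall_pow_dvd (fun p hp => hs p (mem_of_mem_erase hp)) fun p hp =>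
        ordProj_dvd_mul_mul_of_not_dvd_multinomial (hs p (mem_of_mem_erase hp)) ha hb hc hsum
          (hnd p (mem_of_mem_erase hp)))
    rw [← pow_succ']
    exact Coprime.prod_right fun p hp => Coprime.pow _ _ <|
      (coprime_primes prime_two (hs p (mem_of_mem_erase hp))).mpr (ne_of_mem_erase hp).symm
  have hhalf : 32 * (a * b * c) ≤ N ^ 3 := by
    subst hsum
    rcases exists_lt_two_mul_of_not_dvd_multinomial (by omega) (hnd 2 h2) with h | h | h
    · exact amgm_three_of_le_two_mul h.le
    · simpa only [add_comm, add_left_comm, mul_comm, mul_left_comm] using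
        amgm_three_of_le_two_mul (x := b) (y := a) (z := c) (by omega)
    · simpa only [add_comm, add_left_comm, mul_comm, mul_left_comm] using
        amgm_three_of_le_two_mul (x := c) (y := a) (z := b) (by omega)
  calc 64 * ∏ p ∈ s, ordProj[p] M = 32 * (2 * ∏ p ∈ s, ordProj[p] M) := by ring
    _ ≤ 32 * (a * b * c) := Nat.mul_le_mul_left 32 (le_of_dvd (by positivity) hdvd)
    _ ≤ N ^ 3 := hhalf

end Carries

theorem lt_mul_one_sub_four_div {K C R N : ℕ} (hN : 3 ≤ N) (hK : K * R ≤ N ^ 6)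
    (hCR : C * R = N ^ 3 * (N - 1) ^ 2 * (N - 2)) : (K : ℝ) * (1 - 4 / N) < C := by
  have hR : (0 : ℝ) < R := by
    exact_mod_cast Nat.pos_of_ne_zero (right_ne_zero_of_mul (hCR ▸ cube_mul_sq_mul_ne_zero hN))
  have hN' : (3 : ℝ) ≤ N := by exact_mod_cast hN
  have hCR' : (C : ℝ) * R = N ^ 3 * (N - 1) ^ 2 * (N - 2) := by
    rw [← Nat.cast_mul, hCR]
    push_cast [Nat.cast_sub (by omega : 1 ≤ N), Nat.cast_sub (by omega : 2 ≤ N)]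
    ring
  have hK' : (K : ℝ) * R ≤ (N : ℝ) ^ 6 := by exact_mod_cast hK
  rw [one_sub_div (by positivity), mul_div_assoc', div_lt_iff₀ (by positivity)]
  refine lt_of_mul_lt_mul_right ?_ hR.le
  rw [mul_assoc (C : ℝ), mul_comm (N : ℝ), ← mul_assoc, hCR']
  have hpos : (0 : ℝ) < N ^ 3 * (N - 1) ^ 2 * (N - 2) * N := by
    have h1 : (0 : ℝ) < N - 1 := by linarith
    have h2 : (0 : ℝ) < N - 2 := by linarith
    positivity
  rcases le_or_gt (N : ℝ) 4 with h4 | h4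
  · have : (K : ℝ) * (N - 4) * R ≤ 0 := by
      rw [mul_right_comm]
      exact mul_nonpos_of_nonneg_of_nonpos (by positivity) (by linarith)
    linarith
  · calc (K : ℝ) * (N - 4) * R = K * R * (N - 4) := by ring
      _ ≤ N ^ 6 * (N - 4) := mul_le_mul_of_nonneg_right hK' (by linarith)
      _ < N ^ 3 * (N - 1) ^ 2 * (N - 2) * N := by
        nlinarith [pow_pos (by linarith : (0 : ℝ) < N) 4]

theorem primeFactors_cube_mul_sq_mul {x y z : ℕ} (hx : x ≠ 0) (hy : y ≠ 0) (hz : z ≠ 0) :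
    (x ^ 3 * y ^ 2 * z).primeFactors = (x * y * z).primeFactors := by
  simp [primeFactors_mul, primeFactors_pow, *]

theorem prod_ordProj_filter_not_dvd_and_dvd_le {N a₁ a₂ a₃ b₁ b₂ b₃ : ℕ} (hN : 3 ≤ N)
    (ha₁ : 0 < a₁) (ha₂ : 0 < a₂) (ha₃ : 0 < a₃) (hasum : a₁ + a₂ + a₃ = N)
    (hb₁ : 0 < b₁) (hb₂ : 0 < b₂) (hb₃ : 0 < b₃) (hbsum : b₁ + b₂ + b₃ = N) :
    let M := N ^ 3 * (N - 1) ^ 2 * (N - 2)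
    let P := fun p => p ∣ multinomial univ ![a₁, a₂, a₃] ∧ p ∣ multinomial univ ![b₁, b₂, b₃]
    let R := ∏ p ∈ M.primeFactors with ¬ P p, ordProj[p] M
    729 * R ≤ N ^ 6 ∧ (2 ∉ M.primeFactors.filter P → 1728 * R ≤ N ^ 6) := by
  intro M P R
  set T := M.primeFactors.filter fun p => ¬ P p
  set A := T.filter fun p => ¬ p ∣ multinomial univ ![a₁, a₂, a₃]
  set B := T.filter fun p => p ∣ multinomial univ ![a₁, a₂, a₃]
  have hR : R = (∏ p ∈ A, ordProj[p] M) * ∏ p ∈ B, ordProj[p] M :=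
    (prod_filter_not_mul_prod_filter _ _ _).symm
  have hT : ∀ p ∈ T, p.Prime := fun p hp => prime_of_mem_primeFactors (mem_filter.mp hp).1
  have hAp : ∀ p ∈ A, p.Prime := fun p hp => hT p (mem_filter.mp hp).1
  have hBp : ∀ p ∈ B, p.Prime := fun p hp => hT p (mem_filter.mp hp).1
  have hAα : ∀ p ∈ A, ¬ p ∣ multinomial univ ![a₁, a₂, a₃] := fun p hp => (mem_filter.mp hp).2
  have hBβ : ∀ p ∈ B, ¬ p ∣ multinomial univ ![b₁, b₂, b₃] := fun p hp hβ =>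
    (mem_filter.mp (mem_filter.mp hp).1).2 ⟨(mem_filter.mp hp).2, hβ⟩
  have hA := prod_ordProj_le ha₁ ha₂ ha₃ hasum hAp hAα
  have hB := prod_ordProj_le hb₁ hb₂ hb₃ hbsum hBp hBβ
  refine ⟨by linarith [Nat.mul_le_mul hA hB], fun h2 => ?_⟩
  have h2M : 2 ∈ M.primeFactors := mem_primeFactors.mpr ⟨prime_two,
    (even_mul_pred_self N).two_dvd.trans ⟨N ^ 2 * (N - 1) * (N - 2), by ring⟩,
    cube_mul_sq_mul_ne_zero hN⟩
  have h2T : 2 ∈ T := mem_filter.mpr ⟨h2M, fun h => h2 (mem_filter.mpr ⟨h2M, h⟩)⟩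
  by_cases hα : 2 ∣ multinomial univ ![a₁, a₂, a₃]
  · have := prod_ordProj_le_of_two_mem hb₁ hb₂ hb₃ hbsum hBp hBβ (mem_filter.mpr ⟨h2T, hα⟩)
    linarith [Nat.mul_le_mul hA this]
  · have := prod_ordProj_le_of_two_mem ha₁ ha₂ ha₃ hasum hAp hAα (mem_filter.mpr ⟨h2T, hα⟩)
    linarith [Nat.mul_le_mul this hB]

end Nat

theorem stmt_14 (N a₁ a₂ a₃ b₁ b₂ b₃ : ℕ) (hN : 3 ≤ N)
    (ha₁ : 0 < a₁) (ha₂ : 0 < a₂) (ha₃ : 0 < a₃) (hasum : a₁ + a₂ + a₃ = N)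
    (hb₁ : 0 < b₁) (hb₂ : 0 < b₂) (hb₃ : 0 < b₃) (hbsum : b₁ + b₂ + b₃ = N)
    (S : Finset ℕ)
    (hS : S = (N * (N - 1) * (N - 2)).primeFactors.filter
      (fun p => p ∣ Nat.multinomial Finset.univ ![a₁, a₂, a₃] ∧
                p ∣ Nat.multinomial Finset.univ ![b₁, b₂, b₃]))
    (C : ℕ)
    (hC : C = ∏ p ∈ S,
      p ^ ((N - 2).factorization p + 2 * (N - 1).factorization p + 3 * N.factorization p)) :
    (3 : ℝ) ^ 6 * (1 - 4 / N) < C ∧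
    (2 ∉ S → (3 : ℝ) ^ 3 * 2 ^ 6 * (1 - 4 / N) < C) := by
  obtain ⟨h729, h1728⟩ :=
    Nat.prod_ordProj_filter_not_dvd_and_dvd_le hN ha₁ ha₂ ha₃ hasum hb₁ hb₂ hb₃ hbsum
  set M := N ^ 3 * (N - 1) ^ 2 * (N - 2)
  rw [← Nat.primeFactors_cube_mul_sq_mul (by omega) (by omega) (by omega)] at hS
  replace hC : C = ∏ p ∈ S, ordProj[p] M := by
    rw [hC]
    refine prod_congr rfl fun p _ => ?_
    rw [Nat.factorization_cube_mul_sq_mul hN]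
    ring_nf
  have hCR := hC ▸ hS ▸ prod_filter_mul_prod_filter_not M.primeFactors _ (fun p => ordProj[p] M)
  rw [← Nat.prod_primeFactors_pow_factorization (Nat.cube_mul_sq_mul_ne_zero hN)] at hCR
  refine ⟨?_, fun h2 => ?_⟩
  · norm_num
    exact_mod_cast Nat.lt_mul_one_sub_four_div hN h729 hCR
  · norm_num
    exact_mod_cast Nat.lt_mul_one_sub_four_div hN (h1728 (hS ▸ h2)) hCR
end

section
/- Let N be a positive integer and let q = P^d be the largest prime power ≤ N (P prime, d ≥ 1, and every prime power ≤ N is ≤ q). Suppose there is a prime p₀ with p₀ ≠ P, p₀ not dividing N, and the base-p₀ digit sum of N at most 5; and suppose that for every prime r which divides N, and also for r = p₀, every r-acceptable decomposition of N into three positive integers has all three summands less than q. Then there do not exist three decompositions of N into three positive integer summands such that for every prime p at least one of the three decompositions is p-acceptable. -/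
/-!
If `p ∤ ch(a₁, …, a_k)`, Legendre's formula shows that adding the `aᵢ` in base `p` produces no
carries: `⌊N / pᵏ⌋ = ∑ ⌊aᵢ / pᵏ⌋` for every `k`, the base-`p` digit sums add up, and every power
of `p` dividing `N` divides each `aᵢ`.

Among three decompositions covering all primes, the `P`-acceptable one has a part `≥ q`, so by
the threshold hypothesis it is acceptable neither for `p₀` nor for any prime divisor of `N`. The
digit sums of the parts of the `p₀`-acceptable one add up to at most `5`, so one of its parts has
digit sum `1`, i.e. is a power of `p₀`; as `p₀ ∤ N`, no prime divisor of `N` divides that part,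
so this decomposition is not acceptable for any prime divisor of `N` either. Hence the third one
is acceptable for every prime divisor of `N`, so `N` divides each of its parts, which is absurd.
-/

open Finset

namespace Nat

variable {ι : Type*} {s : Finset ι} {f : ι → ℕ} {p k : ℕ}

theorem sum_factorization_factorial_eq_of_not_dvd_multinomial (h : ¬ p ∣ multinomial s f) :
    ∑ i ∈ s, (f i)!.factorization p = (∑ i ∈ s, f i)!.factorization p := by
  have hspec := congrArg (fun n => n.factorization p) (multinomial_spec s f)
  rwa [factorization_mul (prod_ne_zero_iff.2 fun i _ => factorial_ne_zero (f i))
      (multinomial_pos s f).ne', Finsupp.add_apply, factorization_eq_zero_of_not_dvd h, add_zero,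
    factorization_prod fun i _ => factorial_ne_zero (f i), Finsupp.finsetSum_apply] at hspec

theorem sum_div_le_sum_div (s : Finset ι) (f : ι → ℕ) (c : ℕ) :
    ∑ i ∈ s, f i / c ≤ (∑ i ∈ s, f i) / c := by
  rcases c.eq_zero_or_pos with rfl | hc
  · simp
  rw [le_div_iff_mul_le hc, sum_mul]
  exact sum_le_sum fun i _ => div_mul_le_self (f i) c

theorem sum_div_pow_eq_of_not_dvd_multinomial (hp : p.Prime) (h : ¬ p ∣ multinomial s f)
    (k : ℕ) : ∑ i ∈ s, f i / p ^ k = (∑ i ∈ s, f i) / p ^ k := by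
  rcases k.eq_zero_or_pos with rfl | hk
  · simp
  set N := ∑ i ∈ s, f i
  have hlog : ∀ n ≤ N, log p n < N + k + 1 := fun n hn => (log_le_self p n).trans_lt (by omega)
  have hterm : ∑ j ∈ Ico 1 (N + k + 1), ∑ i ∈ s, f i / p ^ j
      = ∑ j ∈ Ico 1 (N + k + 1), N / p ^ j := by
    rw [sum_comm, ← factorization_factorial hp (hlog N le_rfl),
      ← sum_factorization_factorial_eq_of_not_dvd_multinomial h]
    exact sum_congr rfl fun i hi =>
      (factorization_factorial hp (hlog _ (single_le_sum (fun _ _ => zero_le _) hi))).symm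
  exact (sum_eq_sum_iff_of_le fun j _ => sum_div_le_sum_div s f _).1 hterm k
    (mem_Ico.2 ⟨hk, by omega⟩)

theorem pow_dvd_of_not_dvd_multinomial (hp : p.Prime) (h : ¬ p ∣ multinomial s f)
    (hk : p ^ k ∣ ∑ i ∈ s, f i) {i : ι} (hi : i ∈ s) : p ^ k ∣ f i := by
  have hsum : ∑ j ∈ s, p ^ k * (f j / p ^ k) = ∑ j ∈ s, f j := by
    rw [← mul_sum, sum_div_pow_eq_of_not_dvd_multinomial hp h, Nat.mul_div_cancel' hk]
  exact ⟨_, ((sum_eq_sum_iff_of_le fun j _ => mul_div_le (f j) _).1 hsum i hi).symm⟩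

theorem exists_pow_le_of_not_dvd_multinomial (hp : p.Prime) (h : ¬ p ∣ multinomial s f)
    (hk : p ^ k ≤ ∑ i ∈ s, f i) : ∃ i ∈ s, p ^ k ≤ f i := by
  by_contra! hlt
  have hsum := sum_div_pow_eq_of_not_dvd_multinomial hp h k
  rw [sum_eq_zero fun i hi => div_eq_of_lt (hlt i hi)] at hsum
  have := Nat.div_pos hk (pow_pos hp.pos k)
  omega

theorem sum_digits_sum_eq_of_not_dvd_multinomial (hp : p.Prime) (h : ¬ p ∣ multinomial s f) :
    ∑ i ∈ s, (p.digits (f i)).sum = (p.digits (∑ i ∈ s, f i)).sum := by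
  have key := congrArg ((p - 1) * ·) (sum_factorization_factorial_eq_of_not_dvd_multinomial h)
  simp only [mul_sum, sub_one_mul_factorization_factorial hp] at key
  rw [sum_tsub_distrib s fun i _ => digit_sum_le p (f i)] at key
  have hle : ∑ i ∈ s, (p.digits (f i)).sum ≤ ∑ i ∈ s, f i :=
    sum_le_sum fun i _ => digit_sum_le p (f i)
  have := digit_sum_le p (∑ i ∈ s, f i)
  omega

theorem digits_sum_pos {b n : ℕ} (hn : n ≠ 0) : 0 < (b.digits n).sum :=
  List.sum_pos_iff_exists_pos_nat.2
    ⟨_, List.getLast_mem _, pos_of_ne_zero (getLast_digit_ne_zero b hn)⟩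

theorem exists_eq_pow_of_digits_sum_eq_one {b : ℕ} (hb : 1 < b) {n : ℕ}
    (h : (b.digits n).sum = 1) : ∃ k, n = b ^ k := by
  induction n using Nat.strong_induction_on with
  | _ n ih =>
    rcases eq_or_ne n 0 with rfl | hn
    · simp at h
    rw [digits_def' hb (pos_of_ne_zero hn), List.sum_cons] at h
    rcases eq_or_ne (n / b) 0 with hq | hq
    · refine ⟨0, pow_zero b ▸ ?_⟩
      rw [hq, digits_zero, List.sum_nil] at h
      have := div_add_mod n b
      rw [hq] at this
      omega
    · have := digits_sum_pos (b := b) hq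
      obtain ⟨k, hk⟩ := ih (n / b) (div_lt_self (pos_of_ne_zero hn) hb) (by omega)
      refine ⟨k + 1, ?_⟩
      have := div_add_mod n b
      rw [hk] at this
      rw [pow_succ']
      omega

theorem exists_eq_pow_of_not_dvd_multinomial (hp : p.Prime) (h : ¬ p ∣ multinomial s f)
    (hpos : ∀ i ∈ s, 0 < f i) (hdig : (p.digits (∑ i ∈ s, f i)).sum < 2 * #s) :
    ∃ i ∈ s, ∃ k, f i = p ^ k := by
  by_contra! hne
  have htwo : ∀ i ∈ s, 2 ≤ (p.digits (f i)).sum := fun i hi => by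
    have := digits_sum_pos (b := p) (hpos i hi).ne'
    have : (p.digits (f i)).sum ≠ 1 := fun h1 =>
      (exists_eq_pow_of_digits_sum_eq_one hp.one_lt h1).elim (hne i hi)
    omega
  have := card_nsmul_le_sum s _ 2 htwo
  rw [sum_digits_sum_eq_of_not_dvd_multinomial hp h, smul_eq_mul] at this
  omega

theorem dvd_of_forall_prime_dvd_not_dvd_multinomial
    (h : ∀ p, p.Prime → p ∣ ∑ i ∈ s, f i → ¬ p ∣ multinomial s f) {i : ι} (hi : i ∈ s) :
    (∑ i ∈ s, f i) ∣ f i := by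
  refine (dvd_iff_prime_pow_dvd_dvd (f i) _).2 fun p k hp hk => ?_
  rcases k.eq_zero_or_pos with rfl | hk0
  · simp
  exact pow_dvd_of_not_dvd_multinomial hp
    (h p hp ((dvd_pow_self p hk0.ne').trans hk)) hk hi

end Nat

open Nat

theorem Fin.exists_third (a b : Fin 3) (hab : a ≠ b) : ∃ c, ∀ j, j = a ∨ j = b ∨ j = c := by
  revert a b; decide

theorem not_forall_prime_exists_not_dvd_multinomial {N P d p₀ : ℕ} (hP : P.Prime)
    (hqN : P ^ d ≤ N) (hp₀ : p₀.Prime) (hp₀N : ¬ p₀ ∣ N) (hdig : (p₀.digits N).sum ≤ 5)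
    (hthresh : ∀ r : ℕ, r.Prime → (r ∣ N ∨ r = p₀) → ∀ x : Fin 3 → ℕ, (∀ i, 0 < x i) →
      ∑ i, x i = N → ¬ r ∣ multinomial univ x → ∀ i, x i < P ^ d)
    (D : Fin 3 → Fin 3 → ℕ) (hpos : ∀ j i, 0 < D j i) (hsum : ∀ j, ∑ i, D j i = N) :
    ¬ ∀ p : ℕ, p.Prime → ∃ j, ¬ p ∣ multinomial univ (D j) := by
  intro hcov
  obtain ⟨jP, hjP⟩ := hcov P hP
  obtain ⟨j₀, hj₀⟩ := hcov p₀ hp₀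
  obtain ⟨i, -, hi⟩ := exists_pow_le_of_not_dvd_multinomial hP hjP (hsum jP ▸ hqN)
  have hA : ∀ r, r.Prime → (r ∣ N ∨ r = p₀) → r ∣ multinomial univ (D jP) := fun r hr hrN =>
    by_contra fun h => (hthresh r hr hrN _ (hpos jP) (hsum jP) h i).not_ge hi
  have hne : jP ≠ j₀ := by
    rintro rfl
    exact hj₀ (hA p₀ hp₀ (.inr rfl))
  obtain ⟨i₀, -, k, hk⟩ := exists_eq_pow_of_not_dvd_multinomial hp₀ hj₀ (fun i _ => hpos j₀ i)
    (by rw [hsum, Finset.card_univ, Fintype.card_fin]; omega)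
  have hB : ∀ r, r.Prime → r ∣ N → r ∣ multinomial univ (D j₀) := fun r hr hrN => by
    by_contra h
    have hr₀ : r ∣ p₀ ^ k :=
      hk ▸ pow_one r ▸ pow_dvd_of_not_dvd_multinomial hr h (by rwa [pow_one, hsum]) (mem_univ i₀)
    exact hp₀N ((prime_dvd_prime_iff_eq hr hp₀).1 (hr.dvd_of_dvd_pow hr₀) ▸ hrN)
  obtain ⟨j₁, hj₁⟩ := Fin.exists_third jP j₀ hne
  have hC : ∀ r, r.Prime → r ∣ ∑ i, D j₁ i → ¬ r ∣ multinomial univ (D j₁) := by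
    intro r hr hrN
    rw [hsum] at hrN
    obtain ⟨j, hj⟩ := hcov r hr
    rcases hj₁ j with rfl | rfl | rfl
    · exact absurd (hA r hr (.inl hrN)) hj
    · exact absurd (hB r hr hrN) hj
    · exact hj
  have hdvd := dvd_of_forall_prime_dvd_not_dvd_multinomial hC (mem_univ 0)
  have hlt : D j₁ 0 < ∑ i, D j₁ i := by
    rw [Fin.sum_univ_three]
    have := hpos j₁ 1
    omega
  exact hlt.not_ge (le_of_dvd (hpos j₁ 0) hdvd)

theorem stmt_18_general (N : ℕ) (P d : ℕ) (hP : P.Prime)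
    (q : ℕ) (hq : q = P ^ d) (hqN : q ≤ N)
    (p₀ : ℕ) (hp₀ : p₀.Prime) (hp₀N : ¬ p₀ ∣ N)
    (hdig : (p₀.digits N).sum ≤ 5)
    (hthresh : ∀ r : ℕ, r.Prime → (r ∣ N ∨ r = p₀) →
      ∀ a b c : ℕ, 0 < a → 0 < b → 0 < c → a + b + c = N →
        ¬ r ∣ Nat.multinomial Finset.univ ![a, b, c] →
        a < q ∧ b < q ∧ c < q) :
    ¬ ∃ a₁ a₂ a₃ b₁ b₂ b₃ c₁ c₂ c₃ : ℕ,
      (0 < a₁ ∧ 0 < a₂ ∧ 0 < a₃ ∧ a₁ + a₂ + a₃ = N) ∧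
      (0 < b₁ ∧ 0 < b₂ ∧ 0 < b₃ ∧ b₁ + b₂ + b₃ = N) ∧
      (0 < c₁ ∧ 0 < c₂ ∧ 0 < c₃ ∧ c₁ + c₂ + c₃ = N) ∧
      (∀ p : ℕ, p.Prime →
        ¬ p ∣ Nat.multinomial Finset.univ ![a₁, a₂, a₃] ∨
        ¬ p ∣ Nat.multinomial Finset.univ ![b₁, b₂, b₃] ∨
        ¬ p ∣ Nat.multinomial Finset.univ ![c₁, c₂, c₃]) := by
  subst hq
  rintro ⟨a₁, a₂, a₃, b₁, b₂, b₃, c₁, c₂, c₃, hA, hB, hC, hcov⟩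
  have hthresh' : ∀ r : ℕ, r.Prime → (r ∣ N ∨ r = p₀) → ∀ x : Fin 3 → ℕ, (∀ i, 0 < x i) →
      ∑ i, x i = N → ¬ r ∣ multinomial univ x → ∀ i, x i < P ^ d := by
    intro r hr hrN x hx hxN hrx
    have hx3 : x = ![x 0, x 1, x 2] := by ext i; fin_cases i <;> rfl
    rw [Fin.sum_univ_three] at hxN
    rw [hx3] at hrx
    have := hthresh r hr hrN _ _ _ (hx 0) (hx 1) (hx 2) hxN hrx
    intro i; fin_cases i <;> simp [this]
  refine not_forall_prime_exists_not_dvd_multinomial hP hqN hp₀ hp₀N hdig hthresh'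
    ![![a₁, a₂, a₃], ![b₁, b₂, b₃], ![c₁, c₂, c₃]] ?_ ?_ ?_
  · simp [Fin.forall_fin_succ, *]
  · simp [Fin.forall_fin_succ, Fin.sum_univ_three, *]
  · simpa [Fin.exists_fin_succ] using hcov

theorem stmt_18 (N : ℕ) (hN : 0 < N) (P d : ℕ) (hP : P.Prime) (hd : 1 ≤ d)
    (q : ℕ) (hq : q = P ^ d) (hqN : q ≤ N)
    (hmax : ∀ P' d' : ℕ, P'.Prime → 1 ≤ d' → P' ^ d' ≤ N → P' ^ d' ≤ q)
    (p₀ : ℕ) (hp₀ : p₀.Prime) (hp₀P : p₀ ≠ P) (hp₀N : ¬ p₀ ∣ N)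
    (hdig : (p₀.digits N).sum ≤ 5)
    (hthresh : ∀ r : ℕ, r.Prime → (r ∣ N ∨ r = p₀) →
      ∀ a b c : ℕ, 0 < a → 0 < b → 0 < c → a + b + c = N →
        ¬ r ∣ Nat.multinomial Finset.univ ![a, b, c] →
        a < q ∧ b < q ∧ c < q) :
    ¬ ∃ a₁ a₂ a₃ b₁ b₂ b₃ c₁ c₂ c₃ : ℕ,
      (0 < a₁ ∧ 0 < a₂ ∧ 0 < a₃ ∧ a₁ + a₂ + a₃ = N) ∧
      (0 < b₁ ∧ 0 < b₂ ∧ 0 < b₃ ∧ b₁ + b₂ + b₃ = N) ∧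
      (0 < c₁ ∧ 0 < c₂ ∧ 0 < c₃ ∧ c₁ + c₂ + c₃ = N) ∧
      (∀ p : ℕ, p.Prime →
        ¬ p ∣ Nat.multinomial Finset.univ ![a₁, a₂, a₃] ∨
        ¬ p ∣ Nat.multinomial Finset.univ ![b₁, b₂, b₃] ∨
        ¬ p ∣ Nat.multinomial Finset.univ ![c₁, c₂, c₃]) :=
  stmt_18_general N P d hP q hq hqN p₀ hp₀ hp₀N hdig hthresh
end
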